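/- arXiv:0803.2171 — 5 statements merged into one kernel-verified Lean document; each statement's English description precedes it below -/
import Mathlib

section
/- Let Z be a strictly stationary mean-zero real-valued random field on ℤ³ with finite fourth moments, observed on finite index sets Dₙ ⊂ ℤ³ satisfying condition (C2) with d = 3. Let Λ = {k₁,…,k_m} ⊂ ℤ³ be a finite set of lags and suppose that for all kᵢ, kⱼ ∈ Λ one has Σ_{x∈ℤ³} |cov(Z(0)Z(kᵢ), Z(x)Z(x+kⱼ))| < ∞. Then the limit Σ = lim_{n→∞} |Dₙ| · cov(Ĝₙ, Ĝₙ) exists entrywise, and its (i,j)th entry equals Σ_{x∈ℤ³} cov(Z(0)Z(kᵢ), Z(x)Z(x+kⱼ)). -/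
/-!
By stationarity, `cov(Z(x)Z(x+u), Z(y)Z(y+v)) = R(y - x)` with
`R(h) = cov(Z(0)Z(u), Z(h)Z(h+v))`, so bilinearity of the covariance gives
`|Dₙ| cov(Ĉₙ(u), Ĉₙ(v)) = ∑ₕ wₙ(h) R(h)`, where
`wₙ(h) = |Dₙ| #{x ∈ Dₙ(u) : x + h ∈ Dₙ(v)} / (|Dₙ(u)| |Dₙ(v)|)`.
Translation by `v ∈ ℤ^d` moves at most `‖v‖₁ |∂Dₙ|` points out of `Dₙ`, so under (C2) the
sets `Dₙ` form a Følner sequence. Hence `wₙ(h) → 1` for each `h`, and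
`wₙ ≤ |Dₙ| / |Dₙ(u)| ≤ 2` uniformly for large `n`; dominated convergence for series with
majorant `2|R|` concludes.
-/
open MeasureTheory ProbabilityTheory Filter Finset Topology

noncomputable section

/-- Covariance of two real-valued random variables: `cov(X,Y) = E[XY] − E[X]E[Y]`. -/
def covRV {Ω : Type*} [MeasurableSpace Ω] (P : Measure Ω) (X Y : Ω → ℝ) : ℝ :=
  (∫ ω, X ω * Y ω ∂P) - (∫ ω, X ω ∂P) * (∫ ω, Y ω ∂P)

/-- Strict stationarity of a random field on `ℤ^d`: every finite-dimensional joint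
distribution is invariant under translation of the sites. -/
def StrictlyStationary {Ω : Type*} [MeasurableSpace Ω] (P : Measure Ω) {d : ℕ}
    (Z : (Fin d → ℤ) → Ω → ℝ) : Prop :=
  ∀ (k : ℕ) (x : Fin k → (Fin d → ℤ)) (h : Fin d → ℤ),
    Measure.map (fun ω => fun i => Z (x i + h) ω) P =
      Measure.map (fun ω => fun i => Z (x i) ω) P

open Classical in
/-- The boundary of a finite index set `D ⊂ ℤ^d`:
`∂D = {x ∈ D : ∃ y ∉ D with max_j |x_j − y_j| = 1}`. -/
def latticeBoundary {d : ℕ} (D : Finset (Fin d → ℤ)) : Finset (Fin d → ℤ) :=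
  D.filter (fun x => ∃ y : Fin d → ℤ, y ∉ D ∧
    (Finset.univ.sup fun j => (x j - y j).natAbs) = 1)

/-- Condition (C2): `c₁ n^d ≤ |Dₙ| ≤ c₂ n^d` and `|∂Dₙ| ≤ c₃ n^{d−1}`. -/
def CondC2 {d : ℕ} (D : ℕ → Finset (Fin d → ℤ)) : Prop :=
  ∃ c₁ c₂ c₃ : ℝ, 0 < c₁ ∧ 0 < c₂ ∧ 0 < c₃ ∧ ∀ n : ℕ,
    c₁ * (n : ℝ) ^ d ≤ ((D n).card : ℝ) ∧ ((D n).card : ℝ) ≤ c₂ * (n : ℝ) ^ d ∧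
    ((latticeBoundary (D n)).card : ℝ) ≤ c₃ * (n : ℝ) ^ (d - 1)

open Classical in
/-- `Dₙ(k) = {x ∈ Dₙ : x + k ∈ Dₙ}`. -/
def lagSet {d : ℕ} (D : Finset (Fin d → ℤ)) (k : Fin d → ℤ) : Finset (Fin d → ℤ) :=
  D.filter (fun x => x + k ∈ D)

/-- The moment estimator `Ĉₙ(k) = (1/|Dₙ(k)|) ∑_{x∈Dₙ(k)} Z(x)Z(x+k)`. -/
def covEst {Ω : Type*} [MeasurableSpace Ω] {d : ℕ} (Z : (Fin d → ℤ) → Ω → ℝ)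
    (D : Finset (Fin d → ℤ)) (k : Fin d → ℤ) (ω : Ω) : ℝ :=
  ((lagSet D k).card : ℝ)⁻¹ * ∑ x ∈ lagSet D k, Z x ω * Z (x + k) ω

open scoped ENNReal

section Escape

variable {G : Type*} [AddGroup G] [DecidableEq G]

def escapeSet (D : Finset G) (v : G) : Finset G :=
  D.filter fun x => x + v ∉ D

theorem escapeSet_zero (D : Finset G) : escapeSet D 0 = ∅ := by
  simp [escapeSet]

theorem card_escapeSet_add_le (D : Finset G) (u v : G) :
    #(escapeSet D (u + v)) ≤ #(escapeSet D u) + #(escapeSet D v) := by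
  have hsub : escapeSet D (u + v) ⊆
      escapeSet D u ∪ (escapeSet D v).map (Equiv.addRight u).symm.toEmbedding := by
    intro x hx
    simp only [escapeSet, mem_filter, mem_union, mem_map_equiv, Equiv.symm_symm,
      Equiv.coe_addRight] at hx ⊢
    by_cases hxu : x + u ∈ D
    · exact Or.inr ⟨hxu, by rw [add_assoc]; exact hx.2⟩
    · exact Or.inl ⟨hx.1, hxu⟩
  calc #(escapeSet D (u + v)) ≤ _ := card_le_card hsub
    _ ≤ _ := card_union_le _ _
    _ = _ := by rw [card_map]

theorem card_escapeSet_nsmul_le (D : Finset G) (v : G) (n : ℕ) :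
    #(escapeSet D (n • v)) ≤ n * #(escapeSet D v) := by
  induction n with
  | zero => simp [escapeSet_zero]
  | succ n ih =>
    rw [succ_nsmul, Nat.succ_mul]
    exact (card_escapeSet_add_le D _ _).trans (Nat.add_le_add_right ih _)

theorem card_le_card_add_sum_card_escapeSet (D E S : Finset G) (hED : E ⊆ D)
    (hE : ∀ x ∈ D, (∀ s ∈ S, x + s ∈ D) → x ∈ E) :
    #D ≤ #E + ∑ s ∈ S, #(escapeSet D s) := by
  have hsub : D \ E ⊆ S.biUnion (escapeSet D) := by
    intro x hx
    obtain ⟨hxD, hxE⟩ := mem_sdiff.1 hx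
    obtain ⟨s, hs, hxs⟩ : ∃ s ∈ S, x + s ∉ D := by
      by_contra! h
      exact hxE (hE x hxD h)
    exact mem_biUnion.2 ⟨s, hs, mem_filter.2 ⟨hxD, hxs⟩⟩
  calc #D = #E + #(D \ E) := by rw [add_comm, card_sdiff_add_card_eq_card hED]
    _ ≤ _ := Nat.add_le_add_left ((card_le_card hsub).trans card_biUnion_le) _

theorem card_filter_add_mem_le (A B : Finset G) (h : G) :
    #(A.filter fun x => x + h ∈ B) ≤ #B :=
  card_le_card_of_injOn (· + h) (fun _ hx => (mem_filter.1 hx).2)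
    fun _ _ _ _ => add_right_cancel

end Escape

section Lattice

variable {d : ℕ}

theorem escapeSet_single_subset_latticeBoundary (D : Finset (Fin d → ℤ)) (j : Fin d) {s : ℤ}
    (hs : s.natAbs = 1) : escapeSet D (Pi.single j s) ⊆ latticeBoundary D := by
  intro x hx
  simp only [escapeSet, mem_filter] at hx
  unfold latticeBoundary
  simp only [mem_filter]
  refine ⟨hx.1, x + Pi.single j s, hx.2, ?_⟩
  have hcoord : ∀ l,
      (x l - (x + Pi.single j s : Fin d → ℤ) l).natAbs = (Pi.single j 1 : Fin d → ℕ) l := by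
    intro l
    rcases eq_or_ne l j with rfl | hl
    · simp [hs]
    · simp [hl]
  simp only [hcoord]
  apply le_antisymm
  · exact Finset.sup_le fun l _ => by rcases eq_or_ne l j with rfl | hl <;> simp [*]
  · exact le_of_eq_of_le (by simp) (le_sup (f := (Pi.single j 1 : Fin d → ℕ)) (mem_univ j))

theorem card_escapeSet_le (D : Finset (Fin d → ℤ)) (v : Fin d → ℤ) :
    #(escapeSet D v) ≤ (∑ j, (v j).natAbs) * #(latticeBoundary D) := by
  have hsingle : ∀ j, #(escapeSet D (Pi.single j (v j))) ≤
      (v j).natAbs * #(latticeBoundary D) := by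
    intro j
    rcases eq_or_ne (v j) 0 with h0 | h0
    · simp [h0, escapeSet_zero]
    have hv : (Pi.single j (v j) : Fin d → ℤ) = (v j).natAbs • Pi.single j (v j).sign := by
      rw [← Pi.single_smul, nsmul_eq_mul, Int.natCast_natAbs, mul_comm, Int.sign_mul_abs]
    rw [hv]
    refine (card_escapeSet_nsmul_le D _ _).trans (Nat.mul_le_mul_left _ (card_le_card ?_))
    exact escapeSet_single_subset_latticeBoundary D j (by simp [Int.natAbs_sign_of_ne_zero h0])
  calc #(escapeSet D v) = #(escapeSet D (∑ j, Pi.single j (v j))) := by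
        rw [Finset.univ_sum_single]
    _ ≤ ∑ j, #(escapeSet D (Pi.single j (v j))) :=
      le_sum_of_subadditive (fun w => #(escapeSet D w)) (by simp [escapeSet_zero])
        (card_escapeSet_add_le D) _ _
    _ ≤ _ := by rw [sum_mul]; exact sum_le_sum fun j _ => hsingle j

end Lattice

section Foelner

variable {G : Type*} [AddGroup G] [DecidableEq G]

/-- The Følner condition for the counting measure (cf. `IsAddFoelner`), with real ratios.
Nonemptiness has to be required separately, since `x / 0 = 0`. -/
def IsFoelnerSeq (D : ℕ → Finset G) : Prop :=
  (∀ᶠ n in atTop, (D n).Nonempty) ∧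
    ∀ v, Tendsto (fun n => (#(escapeSet (D n) v) : ℝ) / #(D n)) atTop (𝓝 0)

theorem IsFoelnerSeq.tendsto_card_div_of_forall_add_mem {D E : ℕ → Finset G}
    (hD : IsFoelnerSeq D) (S : Finset G) (hED : ∀ n, E n ⊆ D n)
    (hE : ∀ n, ∀ x ∈ D n, (∀ s ∈ S, x + s ∈ D n) → x ∈ E n) :
    Tendsto (fun n => (#(E n) : ℝ) / #(D n)) atTop (𝓝 1) := by
  have hlow : Tendsto (fun n => 1 - ∑ s ∈ S, (#(escapeSet (D n) s) : ℝ) / #(D n))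
      atTop (𝓝 1) := by
    simpa using (tendsto_finsetSum S fun s _ => hD.2 s).const_sub 1
  refine tendsto_of_tendsto_of_tendsto_of_le_of_le' hlow tendsto_const_nhds ?_ ?_
  · filter_upwards [hD.1] with n hn
    have hpos : (0 : ℝ) < #(D n) := by exact_mod_cast hn.card_pos
    rw [← sum_div, sub_le_iff_le_add, ← add_div, le_div_iff₀ hpos, one_mul]
    exact_mod_cast card_le_card_add_sum_card_escapeSet (D n) (E n) S (hED n) (hE n)
  · exact Eventually.of_forall fun n =>
      div_le_one_of_le₀ (by exact_mod_cast card_le_card (hED n)) (by positivity)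

end Foelner

theorem CondC2.isFoelnerSeq {d : ℕ} {D : ℕ → Finset (Fin d → ℤ)} (hd : d ≠ 0)
    (hD : CondC2 D) : IsFoelnerSeq D := by
  obtain ⟨c₁, _, c₃, hc₁, -, hc₃, hC⟩ := hD
  have hpos : ∀ n ≥ 1, (0 : ℝ) < #(D n) := fun n hn =>
    (mul_pos hc₁ (pow_pos (by exact_mod_cast hn) d)).trans_le (hC n).1
  refine ⟨(eventually_ge_atTop 1).mono fun n hn => card_pos.1 (by exact_mod_cast hpos n hn),
    fun v => ?_⟩
  set L : ℕ := ∑ j, (v j).natAbs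
  refine squeeze_zero' (Eventually.of_forall fun n => by positivity) ?_
    (tendsto_const_div_atTop_nhds_zero_nat ((L : ℝ) * c₃ / c₁))
  filter_upwards [eventually_ge_atTop 1] with n hn
  have hn' : (0 : ℝ) < n := by exact_mod_cast hn
  calc (#(escapeSet (D n) v) : ℝ) / #(D n) ≤ (L : ℝ) * #(latticeBoundary (D n)) / #(D n) := by
        gcongr
        exact_mod_cast card_escapeSet_le (D n) v
    _ ≤ L * (c₃ * n ^ (d - 1)) / (c₁ * n ^ d) :=
        div_le_div₀ (by positivity) (by gcongr; exact (hC n).2.2) (by positivity) (hC n).1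
    _ = L * c₃ / c₁ / n := by
        rw [← Nat.sub_add_cancel (Nat.one_le_iff_ne_zero.2 hd), pow_succ]
        field_simp
        simp

section LagWeight

variable {d : ℕ}

/-- The weight with which the lag-`h` covariance enters `|D| · cov(Ĉ(u), Ĉ(v))`. -/
def lagWeight (D : Finset (Fin d → ℤ)) (u v h : Fin d → ℤ) : ℝ :=
  #D * #((lagSet D u).filter fun x => x + h ∈ lagSet D v) / (#(lagSet D u) * #(lagSet D v))

variable {D : ℕ → Finset (Fin d → ℤ)}

theorem IsFoelnerSeq.tendsto_card_lagSet_div (hD : IsFoelnerSeq D) (v : Fin d → ℤ) :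
    Tendsto (fun n => (#(lagSet (D n) v) : ℝ) / #(D n)) atTop (𝓝 1) :=
  hD.tendsto_card_div_of_forall_add_mem {v} (fun _ => filter_subset _ _)
    fun _ _ hx hS => mem_filter.2 ⟨hx, hS v (mem_singleton_self v)⟩

theorem IsFoelnerSeq.tendsto_lagWeight (hD : IsFoelnerSeq D) (u v h : Fin d → ℤ) :
    Tendsto (fun n => lagWeight (D n) u v h) atTop (𝓝 1) := by
  have hN := hD.tendsto_card_div_of_forall_add_mem {u, h, h + v}
    (E := fun n => (lagSet (D n) u).filter fun x => x + h ∈ lagSet (D n) v)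
    (fun _ => (filter_subset _ _).trans (filter_subset _ _)) fun _ _ hx hS => by
      simp only [mem_insert, mem_singleton, forall_eq_or_imp, forall_eq] at hS
      simp only [lagSet, mem_filter, ← add_assoc] at hS ⊢
      exact ⟨⟨hx, hS.1⟩, hS.2.1, hS.2.2⟩
  have hlim := hN.div ((hD.tendsto_card_lagSet_div u).mul (hD.tendsto_card_lagSet_div v))
    (by norm_num)
  rw [mul_one, div_one] at hlim
  refine hlim.congr' ?_
  filter_upwards [hD.1] with n hn
  have : (#(D n) : ℝ) ≠ 0 := by exact_mod_cast hn.card_pos.ne'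
  simp only [lagWeight, Pi.div_apply]
  field_simp

theorem IsFoelnerSeq.eventually_lagWeight_le_two (hD : IsFoelnerSeq D) (u v : Fin d → ℤ) :
    ∀ᶠ n in atTop, ∀ h, lagWeight (D n) u v h ≤ 2 := by
  filter_upwards [hD.1, (hD.tendsto_card_lagSet_div u).eventually_const_lt one_half_lt_one]
    with n hn hu h
  have hpos : (0 : ℝ) < #(D n) := by exact_mod_cast hn.card_pos
  have hDu : (#(D n) : ℝ) / #(lagSet (D n) u) ≤ 2 := by
    rw [lt_div_iff₀ hpos] at hu
    rw [div_le_iff₀ (by linarith)]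
    linarith
  have hNv : (#((lagSet (D n) u).filter fun x => x + h ∈ lagSet (D n) v) : ℝ) /
      #(lagSet (D n) v) ≤ 1 :=
    div_le_one_of_le₀ (by exact_mod_cast card_filter_add_mem_le _ _ h) (by positivity)
  calc lagWeight (D n) u v h = #(D n) / #(lagSet (D n) u) *
        (#((lagSet (D n) u).filter fun x => x + h ∈ lagSet (D n) v) / #(lagSet (D n) v)) := by
        rw [lagWeight, mul_div_mul_comm]
    _ ≤ 2 * 1 := mul_le_mul hDu hNv (by positivity) zero_le_two
    _ = 2 := mul_one 2

end LagWeight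

theorem card_filter_sub_eq_card_filter_add_mem {G : Type*} [AddCommGroup G] [DecidableEq G]
    (A B : Finset G) (h : G) :
    #((A ×ˢ B).filter fun p => p.2 - p.1 = h) = #(A.filter fun x => x + h ∈ B) := by
  refine card_nbij' Prod.fst (fun x => (x, x + h)) ?_ ?_ ?_ ?_
  · intro p hp
    simp only [coe_filter, mem_product, Set.mem_ofPred_eq] at hp ⊢
    exact ⟨hp.1.1, by rw [← hp.2, add_sub_cancel]; exact hp.1.2⟩
  · intro x hx
    simp only [coe_filter, mem_product, Set.mem_ofPred_eq] at hx ⊢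
    exact ⟨hx, add_sub_cancel_left x h⟩
  · intro p hp
    simp only [coe_filter, mem_product, Set.mem_ofPred_eq] at hp
    exact Prod.ext rfl (by simp [← hp.2])
  · intro x _
    rfl

theorem sum_sum_sub_eq_tsum_card_mul {G : Type*} [AddCommGroup G] [DecidableEq G]
    (A B : Finset G) (R : G → ℝ) :
    ∑ x ∈ A, ∑ y ∈ B, R (y - x) = ∑' h, #(A.filter fun x => x + h ∈ B) * R h := by
  have hsupp : ∀ h ∉ (A ×ˢ B).image (fun p => p.2 - p.1),
      (#(A.filter fun x => x + h ∈ B) : ℝ) * R h = 0 := by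
    intro h hh
    rw [← card_filter_sub_eq_card_filter_add_mem, card_eq_zero.2, CharP.cast_eq_zero, zero_mul]
    exact filter_eq_empty_iff.2 fun p hp hph => hh (mem_image.2 ⟨p, hp, hph⟩)
  rw [tsum_eq_sum hsupp, ← sum_product', sum_comp R fun p : G × G => p.2 - p.1]
  refine sum_congr rfl fun h _ => ?_
  rw [nsmul_eq_mul, card_filter_sub_eq_card_filter_add_mem]

section Covariance

variable {Ω : Type*} [MeasurableSpace Ω] {P : Measure Ω}

theorem covRV_eq_covariance [IsProbabilityMeasure P] {X Y : Ω → ℝ} (hX : MemLp X 2 P)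
    (hY : MemLp Y 2 P) :
    covRV P X Y = cov[X, Y; P] :=
  (covariance_eq_sub hX hY).symm

theorem covRV_const_mul_sum [IsProbabilityMeasure P] {ι κ : Type*} (A : Finset ι)
    (B : Finset κ) (a b : ℝ) {X : ι → Ω → ℝ} {Y : κ → Ω → ℝ} (hX : ∀ i ∈ A, MemLp (X i) 2 P)
    (hY : ∀ j ∈ B, MemLp (Y j) 2 P) :
    covRV P (fun ω => a * ∑ i ∈ A, X i ω) (fun ω => b * ∑ j ∈ B, Y j ω) =
      a * b * ∑ i ∈ A, ∑ j ∈ B, covRV P (X i) (Y j) := by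
  rw [covRV_eq_covariance ((memLp_finsetSum A hX).const_mul a)
      ((memLp_finsetSum B hY).const_mul b),
    covariance_const_mul_left, covariance_const_mul_right, covariance_fun_sum_fun_sum' hX hY,
    ← mul_assoc]
  refine congrArg (a * b * ·) (sum_congr rfl fun i hi => sum_congr rfl fun j hj => ?_)
  exact (covRV_eq_covariance (hX i hi) (hY j hj)).symm

theorem memLp_two_mul_of_memLp_four {X Y : Ω → ℝ} (hX : MemLp X 4 P) (hY : MemLp Y 4 P) :
    MemLp (fun ω => X ω * Y ω) 2 P := by
  have : ENNReal.HolderTriple 4 4 2 := ⟨by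
    rw [show (4 : ℝ≥0∞) = 2 * 2 by norm_num, ENNReal.mul_inv (by simp) (by simp), ← mul_add,
      ENNReal.inv_two_add_inv_two, mul_one]⟩
  exact hY.mul' hX

variable {d : ℕ} {Z : (Fin d → ℤ) → Ω → ℝ}

theorem StrictlyStationary.integral_comp_add (hstat : StrictlyStationary P Z)
    (hZ : ∀ x, AEMeasurable (Z x) P) {k : ℕ} (x : Fin k → Fin d → ℤ) (v : Fin d → ℤ)
    {g : (Fin k → ℝ) → ℝ} (hg : Continuous g) :
    ∫ ω, g (fun i => Z (x i + v) ω) ∂P = ∫ ω, g (fun i => Z (x i) ω) ∂P := by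
  rw [← integral_map (aemeasurable_pi_lambda _ fun i => hZ _) hg.aestronglyMeasurable,
    hstat k x v, integral_map (aemeasurable_pi_lambda _ fun i => hZ _) hg.aestronglyMeasurable]

theorem StrictlyStationary.covRV_mul_add (hstat : StrictlyStationary P Z)
    (hZ : ∀ x, AEMeasurable (Z x) P) (a b c e v : Fin d → ℤ) :
    covRV P (fun ω => Z (a + v) ω * Z (b + v) ω) (fun ω => Z (c + v) ω * Z (e + v) ω) =
      covRV P (fun ω => Z a ω * Z b ω) (fun ω => Z c ω * Z e ω) := by
  have hshift := fun {g} (hg : Continuous g) => hstat.integral_comp_add hZ ![a, b, c, e] v hg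
  have h₁ := hshift (g := fun z => z 0 * z 1 * (z 2 * z 3)) (by fun_prop)
  have h₂ := hshift (g := fun z => z 0 * z 1) (by fun_prop)
  have h₃ := hshift (g := fun z => z 2 * z 3) (by fun_prop)
  simp only [Matrix.cons_val_zero, Matrix.cons_val_one, Matrix.cons_val_two,
    Matrix.cons_val_three, Matrix.head_cons, Matrix.tail_cons] at h₁ h₂ h₃
  rw [covRV, covRV, h₁, h₂, h₃]

end Covariance

section RandomField

variable {Ω : Type*} [MeasurableSpace Ω] {P : Measure Ω} [IsProbabilityMeasure P] {d : ℕ}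
  {Z : (Fin d → ℤ) → Ω → ℝ}

theorem card_mul_covRV_covEst_eq_tsum (hstat : StrictlyStationary P Z)
    (hZ : ∀ x, MemLp (Z x) 4 P) (D : Finset (Fin d → ℤ)) (u v : Fin d → ℤ) :
    #D * covRV P (covEst Z D u) (covEst Z D v) =
      ∑' h, lagWeight D u v h *
        covRV P (fun ω => Z 0 ω * Z u ω) (fun ω => Z h ω * Z (h + v) ω) := by
  set R : (Fin d → ℤ) → ℝ :=
    fun h => covRV P (fun ω => Z 0 ω * Z u ω) (fun ω => Z h ω * Z (h + v) ω)
  have hshift : ∀ x y : Fin d → ℤ,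
      covRV P (fun ω => Z x ω * Z (x + u) ω) (fun ω => Z y ω * Z (y + v) ω) = R (y - x) := by
    intro x y
    have := hstat.covRV_mul_add (fun x => (hZ x).aestronglyMeasurable.aemeasurable)
      0 u (y - x) (y - x + v) x
    rwa [zero_add, sub_add_cancel, add_right_comm, sub_add_cancel, add_comm u] at this
  have hcov := covRV_const_mul_sum (P := P) (lagSet D u) (lagSet D v)
    (#(lagSet D u))⁻¹ (#(lagSet D v))⁻¹
    (fun x _ => memLp_two_mul_of_memLp_four (hZ x) (hZ (x + u)))
    (fun y _ => memLp_two_mul_of_memLp_four (hZ y) (hZ (y + v)))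
  simp only [hshift] at hcov
  unfold covEst
  rw [hcov, sum_sum_sub_eq_tsum_card_mul _ _ R, ← tsum_mul_left, ← tsum_mul_left]
  refine tsum_congr fun h => ?_
  rw [lagWeight]
  ring

theorem IsFoelnerSeq.tendsto_card_mul_covRV_covEst {D : ℕ → Finset (Fin d → ℤ)}
    (hD : IsFoelnerSeq D) (hstat : StrictlyStationary P Z) (hZ : ∀ x, MemLp (Z x) 4 P)
    (u v : Fin d → ℤ)
    (hsum : Summable fun x =>
      |covRV P (fun ω => Z 0 ω * Z u ω) (fun ω => Z x ω * Z (x + v) ω)|) :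
    Tendsto (fun n => #(D n) * covRV P (covEst Z (D n) u) (covEst Z (D n) v)) atTop
      (𝓝 (∑' x, covRV P (fun ω => Z 0 ω * Z u ω) (fun ω => Z x ω * Z (x + v) ω))) := by
  simp only [card_mul_covRV_covEst_eq_tsum hstat hZ]
  refine tendsto_tsum_of_dominated_convergence (hsum.mul_left 2) (fun h => ?_) ?_
  · simpa using (hD.tendsto_lagWeight u v h).mul_const _
  · filter_upwards [hD.eventually_lagWeight_le_two u v] with n hn h
    rw [norm_mul, Real.norm_of_nonneg (by unfold lagWeight; positivity), Real.norm_eq_abs]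
    exact mul_le_mul_of_nonneg_right (hn h) (abs_nonneg _)

end RandomField

theorem asymptotic_covariance_matrix_discrete_lags_general
    {Ω : Type*} [MeasurableSpace Ω] (P : Measure Ω) [IsProbabilityMeasure P]
    (Z : (Fin 3 → ℤ) → Ω → ℝ)
    (hstat : StrictlyStationary P Z)
    (hmom4 : ∀ x, MemLp (Z x) 4 P)
    (D : ℕ → Finset (Fin 3 → ℤ)) (hD : CondC2 D)
    (m : ℕ) (k : Fin m → (Fin 3 → ℤ))
    (hsum : ∀ i j : Fin m, Summable (fun x : Fin 3 → ℤ =>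
      |covRV P (fun ω => Z 0 ω * Z (k i) ω) (fun ω => Z x ω * Z (x + k j) ω)|)) :
    ∀ i j : Fin m,
      Tendsto (fun n => ((D n).card : ℝ) *
          covRV P (covEst Z (D n) (k i)) (covEst Z (D n) (k j))) atTop
        (𝓝 (∑' x : Fin 3 → ℤ,
          covRV P (fun ω => Z 0 ω * Z (k i) ω) (fun ω => Z x ω * Z (x + k j) ω))) :=
  fun i j => (hD.isFoelnerSeq three_ne_zero).tendsto_card_mul_covRV_covEst hstat hmom4
    (k i) (k j) (hsum i j)

/-- first part of Theorem 1. For a strictly stationary mean-zero random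
field on `ℤ³` with finite fourth moments, observed on sets `Dₙ` satisfying (C2), if the
covariances of products are absolutely summable over all lags in `Λ`, then
`|Dₙ|·cov(Ĉₙ(kᵢ), Ĉₙ(kⱼ))` converges, for each pair of lags, to
`∑_{x∈ℤ³} cov(Z(0)Z(kᵢ), Z(x)Z(x+kⱼ))`. -/
theorem asymptotic_covariance_matrix_discrete_lags
    {Ω : Type*} [MeasurableSpace Ω] (P : Measure Ω) [IsProbabilityMeasure P]
    (Z : (Fin 3 → ℤ) → Ω → ℝ)
    (hmeas : ∀ x, Measurable (Z x))
    (hstat : StrictlyStationary P Z)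
    (hmean : ∀ x, ∫ ω, Z x ω ∂P = 0)
    (hmom4 : ∀ x, MemLp (Z x) 4 P)
    (D : ℕ → Finset (Fin 3 → ℤ)) (hD : CondC2 D)
    (m : ℕ) (k : Fin m → (Fin 3 → ℤ))
    (hsum : ∀ i j : Fin m, Summable (fun x : Fin 3 → ℤ =>
      |covRV P (fun ω => Z 0 ω * Z (k i) ω) (fun ω => Z x ω * Z (x + k j) ω)|)) :
    ∀ i j : Fin m,
      Tendsto (fun n => ((D n).card : ℝ) *
          covRV P (covEst Z (D n) (k i)) (covEst Z (D n) (k j))) atTop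
        (𝓝 (∑' x : Fin 3 → ℤ,
          covRV P (fun ω => Z 0 ω * Z (k i) ω) (fun ω => Z x ω * Z (x + k j) ω))) :=
  asymptotic_covariance_matrix_discrete_lags_general P Z hstat hmom4 D hD m k hsum

end
end

section
/- Let Z be a mean-zero real-valued random field on S × ℤ (S ⊂ ℝ² a fixed finite set of spatial sites) with finite fourth moments, strictly stationary in time and with covariance cov(Z(s,t), Z(s+h,t+u)) = C(h,u) depending only on the lag (h,u). Let Λ = {(h₁,u₁),…,(h_m,u_m)} be a finite set of space–time lags with each S(hᵢ) nonempty. Assume that Σ_{t∈ℤ} |cov{Z(s₁,0)Z(s₁+hᵢ,uᵢ), Z(s₂,t)Z(s₂+hⱼ,t+uⱼ)}| < ∞ for all i,j ≤ m, all s₁ ∈ S(hᵢ) and all s₂ ∈ S(hⱼ). Then the limit Σ = lim_{n→∞} |Tₙ| cov(Ĝₙ, Ĝₙ) exists entrywise, and its (i,j)th entry equals (1/(|S(hᵢ)||S(hⱼ)|)) Σ_{s₁∈S(hᵢ)} Σ_{s₂∈S(hⱼ)} Σ_{t∈ℤ} cov{Z(s₁,0)Z(s₁+hᵢ,uᵢ),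 Z(s₂,t)Z(s₂+hⱼ,t+uⱼ)}. -/
open MeasureTheory ProbabilityTheory Filter Finset Topology

noncomputable section

/-- Strict stationarity in time of a random field on `S × ℤ`: the joint law of finitely
many coordinates, at sites in `S`, is invariant under time shifts. -/
def TimeStationary {Ω : Type*} [MeasurableSpace Ω] (P : Measure Ω)
    (S : Finset (ℝ × ℝ)) (Z : (ℝ × ℝ) → ℤ → Ω → ℝ) : Prop :=
  ∀ (k : ℕ) (s : Fin k → ℝ × ℝ) (t : Fin k → ℤ) (τ : ℤ), (∀ i, s i ∈ S) →
    Measure.map (fun ω => fun i => Z (s i) (t i + τ) ω) P =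
      Measure.map (fun ω => fun i => Z (s i) (t i) ω) P

open Classical in
/-- `S(h) = {s ∈ S : s + h ∈ S}`. -/
def spatialLagSet (S : Finset (ℝ × ℝ)) (h : ℝ × ℝ) : Finset (ℝ × ℝ) :=
  S.filter (fun s => s + h ∈ S)

/-- The estimator
`Ĉₙ(h,u) = (1/(|S(h)| |Tₙ|)) ∑_{s∈S(h)} ∑_{t=1}^{n−u} Z(s,t)Z(s+h,t+u)`, with `Tₙ = {1,…,n}`. -/
def covEstST {Ω : Type*} [MeasurableSpace Ω] (Z : (ℝ × ℝ) → ℤ → Ω → ℝ)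
    (S : Finset (ℝ × ℝ)) (h : ℝ × ℝ) (u : ℕ) (n : ℕ) (ω : Ω) : ℝ :=
  (((spatialLagSet S h).card : ℝ) * (n : ℝ))⁻¹ *
    ∑ s ∈ spatialLagSet S h, ∑ t ∈ Finset.Icc (1 : ℤ) ((n : ℤ) - (u : ℤ)),
      Z s t ω * Z (s + h) (t + (u : ℤ)) ω

/-! With `Y(s,t) = Z(s,t) Z(s+h,t+u)`, bilinearity of the covariance (all products being
integrable thanks to the fourth moments) turns `n · cov(Ĉₙ(hᵢ,uᵢ), Ĉₙ(hⱼ,uⱼ))` into a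
normalised sum over pairs of sites of `n⁻¹ ∑_{t₁,t₂} cov(Yᵢ(s₁,t₁), Yⱼ(s₂,t₂))`. By
stationarity each term is a function `F(t₂ - t₁)`, so the double time sum equals
`∑_t Nₙ(t) F(t)`, where `Nₙ(t) ≤ n` counts the pairs of times at lag `t` and `Nₙ(t)/n → 1`.
Dominated convergence, with the summable bound `|F|`, gives the limit `∑_t F(t)`. -/

instance : ENNReal.HolderTriple 4 4 2 :=
  ⟨by
    rw [← ENNReal.add_halves (2⁻¹ : ENNReal), ENNReal.div_eq_inv_mul,
      ← ENNReal.mul_inv (by simp) (by simp)]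
    norm_num⟩

section Covariance

variable {Ω : Type*} [MeasurableSpace Ω] {P : Measure Ω}

theorem covRV_const_mul_const_mul (c d : ℝ) (X Y : Ω → ℝ) :
    covRV P (fun ω => c * X ω) (fun ω => d * Y ω) = c * d * covRV P X Y := by
  simp_rw [covRV, mul_mul_mul_comm c, integral_const_mul]
  ring

theorem covRV_sum_sum {ι κ : Type*} (K : Finset ι) (L : Finset κ)
    {X : ι → Ω → ℝ} {Y : κ → Ω → ℝ} (hX : ∀ k ∈ K, Integrable (X k) P)
    (hY : ∀ l ∈ L, Integrable (Y l) P)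
    (hXY : ∀ k ∈ K, ∀ l ∈ L, Integrable (fun ω => X k ω * Y l ω) P) :
    covRV P (fun ω => ∑ k ∈ K, X k ω) (fun ω => ∑ l ∈ L, Y l ω) =
      ∑ k ∈ K, ∑ l ∈ L, covRV P (X k) (Y l) := by
  have hprod : ∫ ω, (∑ k ∈ K, X k ω) * (∑ l ∈ L, Y l ω) ∂P =
      ∑ k ∈ K, ∑ l ∈ L, ∫ ω, X k ω * Y l ω ∂P := by
    simp_rw [sum_mul_sum]
    rw [integral_finsetSum _ fun k hk => integrable_finsetSum _ (hXY k hk)]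
    exact sum_congr rfl fun k hk => integral_finsetSum _ (hXY k hk)
  rw [covRV, hprod, integral_finsetSum _ hX, integral_finsetSum _ hY, sum_mul_sum]
  simp only [covRV, ← sum_sub_distrib]

end Covariance

theorem sum_sum_sub_eq_tsum (F : ℤ → ℝ) (I J : Finset ℤ) :
    ∑ t₁ ∈ I, ∑ t₂ ∈ J, F (t₂ - t₁) = ∑' t : ℤ, (#{t₁ ∈ I | t₁ + t ∈ J} : ℝ) * F t := by
  have inner (t₁ : ℤ) :
      ∑ t₂ ∈ J, F (t₂ - t₁) = ∑' t : ℤ, if t₁ + t ∈ J then F t else 0 := by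
    rw [← (Equiv.subRight t₁).tsum_eq, tsum_eq_sum (s := J) fun t₂ ht₂ => by simp [ht₂]]
    exact sum_congr rfl fun t₂ ht₂ => by simp [ht₂]
  simp_rw [inner, natCast_card_filter, sum_mul, ite_mul, one_mul, zero_mul]
  refine (Summable.tsum_finsetSum fun t₁ _ => ?_).symm
  refine summable_of_ne_finset_zero (s := J.image (· - t₁)) fun t ht => ?_
  simp only [mem_image, not_exists, not_and] at ht
  exact if_neg fun h => ht _ h (by ring)

def timeLagCount (a b n : ℕ) (t : ℤ) : ℕ :=
  #{t₁ ∈ Icc 1 ((n : ℤ) - a) | t₁ + t ∈ Icc 1 ((n : ℤ) - b)}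

theorem timeLagCount_bounds (a b n : ℕ) (t : ℤ) :
    (n : ℝ) - (a + b + |(t : ℝ)|) ≤ timeLagCount a b n t ∧ (timeLagCount a b n t : ℝ) ≤ n := by
  have hIcc : {t₁ ∈ Icc 1 ((n : ℤ) - a) | t₁ + t ∈ Icc 1 ((n : ℤ) - b)} =
      Icc (max 1 (1 - t)) (min ((n : ℤ) - a) ((n : ℤ) - b - t)) := by
    ext x
    simp only [mem_filter, mem_Icc, le_min_iff, max_le_iff]
    omega
  have hcard : (timeLagCount a b n t : ℤ) =
      (min ((n : ℤ) - a) (n - b - t) + 1 - max 1 (1 - t)).toNat := by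
    rw [timeLagCount, hIcc, Int.card_Icc]
  have lower : (n : ℤ) - (a + b + |t|) ≤ timeLagCount a b n t := by
    cases abs_cases t <;> omega
  have upper : (timeLagCount a b n t : ℤ) ≤ n := by omega
  constructor
  · exact_mod_cast lower
  · exact_mod_cast upper

theorem tendsto_timeLagCount_div (a b : ℕ) (t : ℤ) :
    Tendsto (fun n : ℕ => (timeLagCount a b n t : ℝ) / n) atTop (𝓝 1) := by
  have lower : Tendsto (fun n : ℕ => 1 - (a + b + |(t : ℝ)|) / n) atTop (𝓝 1) := by
    simpa using (tendsto_const_nhds (x := (1 : ℝ))).sub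
      (tendsto_const_div_atTop_nhds_zero_nat (a + b + |(t : ℝ)|))
  refine tendsto_of_tendsto_of_tendsto_of_le_of_le' lower tendsto_const_nhds ?_ ?_
  · filter_upwards [eventually_gt_atTop 0] with n hn
    have hn' : (0 : ℝ) < n := by exact_mod_cast hn
    rw [one_sub_div hn'.ne', div_le_div_iff_of_pos_right hn']
    exact (timeLagCount_bounds a b n t).1
  · exact Eventually.of_forall fun n =>
      div_le_one_of_le₀ (timeLagCount_bounds a b n t).2 n.cast_nonneg

theorem tendsto_inv_mul_sum_Icc_sum_Icc_sub {F : ℤ → ℝ} (hF : Summable fun t => |F t|)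
    (a b : ℕ) :
    Tendsto (fun n : ℕ => (n : ℝ)⁻¹ *
        ∑ t₁ ∈ Icc 1 ((n : ℤ) - a), ∑ t₂ ∈ Icc 1 ((n : ℤ) - b), F (t₂ - t₁))
      atTop (𝓝 (∑' t, F t)) := by
  have hrepr (n : ℕ) : (n : ℝ)⁻¹ *
      ∑ t₁ ∈ Icc 1 ((n : ℤ) - a), ∑ t₂ ∈ Icc 1 ((n : ℤ) - b), F (t₂ - t₁) =
        ∑' t, (timeLagCount a b n t : ℝ) / n * F t := by
    rw [sum_sum_sub_eq_tsum, ← tsum_mul_left]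
    exact tsum_congr fun t => by rw [timeLagCount]; ring
  simp_rw [hrepr]
  refine tendsto_tsum_of_dominated_convergence hF (fun t => ?_) (Eventually.of_forall fun n t => ?_)
  · simpa only [one_mul] using (tendsto_timeLagCount_div a b t).mul_const (F t)
  · rw [Real.norm_eq_abs, abs_mul, abs_of_nonneg (by positivity)]
    exact mul_le_of_le_one_left (abs_nonneg _)
      (div_le_one_of_le₀ (timeLagCount_bounds a b n t).2 n.cast_nonneg)

section RandomField

variable {Ω : Type*} [MeasurableSpace Ω] {P : Measure Ω} {S : Finset (ℝ × ℝ)}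
  {Z : (ℝ × ℝ) → ℤ → Ω → ℝ}

theorem mem_spatialLagSet {h s : ℝ × ℝ} : s ∈ spatialLagSet S h ↔ s ∈ S ∧ s + h ∈ S := by
  simp [spatialLagSet]

theorem TimeStationary.integral_comp_shift (hstat : TimeStationary P S Z)
    (hmeas : ∀ s t, Measurable (Z s t)) {k : ℕ} {s : Fin k → ℝ × ℝ} (hs : ∀ i, s i ∈ S)
    (t : Fin k → ℤ) (τ : ℤ) {g : (Fin k → ℝ) → ℝ} (hg : Measurable g) :
    ∫ ω, g (fun i => Z (s i) (t i + τ) ω) ∂P = ∫ ω, g (fun i => Z (s i) (t i) ω) ∂P := by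
  have hmeas_vec (t' : Fin k → ℤ) : Measurable fun ω i => Z (s i) (t' i) ω :=
    measurable_pi_lambda _ fun i => hmeas _ _
  rw [← integral_map (hmeas_vec _).aemeasurable hg.aestronglyMeasurable, hstat k s t τ hs,
    integral_map (hmeas_vec _).aemeasurable hg.aestronglyMeasurable]

theorem TimeStationary.covRV_mul_shift (hstat : TimeStationary P S Z)
    (hmeas : ∀ s t, Measurable (Z s t)) {a b c d : ℝ × ℝ} (ha : a ∈ S) (hb : b ∈ S)
    (hc : c ∈ S) (hd : d ∈ S) (t₁ t₂ t₃ t₄ τ : ℤ) :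
    covRV P (fun ω => Z a (t₁ + τ) ω * Z b (t₂ + τ) ω)
        (fun ω => Z c (t₃ + τ) ω * Z d (t₄ + τ) ω) =
      covRV P (fun ω => Z a t₁ ω * Z b t₂ ω) (fun ω => Z c t₃ ω * Z d t₄ ω) := by
  have shift {g : (Fin 4 → ℝ) → ℝ} (hg : Measurable g) :=
    hstat.integral_comp_shift hmeas (s := ![a, b, c, d])
      (by intro i; fin_cases i <;> assumption) ![t₁, t₂, t₃, t₄] τ hg
  have h₀₁ := shift (g := fun v => v 0 * v 1) (by fun_prop)
  have h₂₃ := shift (g := fun v => v 2 * v 3) (by fun_prop)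
  have h₀₁₂₃ := shift (g := fun v => v 0 * v 1 * (v 2 * v 3)) (by fun_prop)
  simp only [Matrix.cons_val] at h₀₁ h₂₃ h₀₁₂₃
  rw [covRV, covRV, h₀₁, h₂₃, h₀₁₂₃]

def lagProduct (Z : (ℝ × ℝ) → ℤ → Ω → ℝ) (s h : ℝ × ℝ) (u : ℕ) (t : ℤ) (ω : Ω) : ℝ :=
  Z s t ω * Z (s + h) (t + u) ω

theorem TimeStationary.covRV_lagProduct (hstat : TimeStationary P S Z)
    (hmeas : ∀ s t, Measurable (Z s t)) {s₁ s₂ h₁ h₂ : ℝ × ℝ}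
    (hs₁ : s₁ ∈ spatialLagSet S h₁) (hs₂ : s₂ ∈ spatialLagSet S h₂) (u₁ u₂ : ℕ) (t₁ t₂ : ℤ) :
    covRV P (lagProduct Z s₁ h₁ u₁ t₁) (lagProduct Z s₂ h₂ u₂ t₂) =
      covRV P (fun ω => Z s₁ 0 ω * Z (s₁ + h₁) u₁ ω) (lagProduct Z s₂ h₂ u₂ (t₂ - t₁)) := by
  rw [mem_spatialLagSet] at hs₁ hs₂
  have := hstat.covRV_mul_shift hmeas hs₁.1 hs₁.2 hs₂.1 hs₂.2 0 u₁ (t₂ - t₁) (t₂ - t₁ + u₂) t₁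
  rw [zero_add, sub_add_cancel, add_right_comm, sub_add_cancel, add_comm (u₁ : ℤ)] at this
  exact this

theorem memLp_lagProduct (hmom4 : ∀ s ∈ S, ∀ t : ℤ, MemLp (Z s t) 4 P) {s h : ℝ × ℝ}
    (hs : s ∈ spatialLagSet S h) (u : ℕ) (t : ℤ) : MemLp (lagProduct Z s h u t) 2 P := by
  rw [mem_spatialLagSet] at hs
  exact (hmom4 _ hs.2 _).mul' (hmom4 _ hs.1 _)

theorem covRV_covEstST [IsFiniteMeasure P] (hmom4 : ∀ s ∈ S, ∀ t : ℤ, MemLp (Z s t) 4 P)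
    (h₁ h₂ : ℝ × ℝ) (u₁ u₂ n : ℕ) :
    covRV P (covEstST Z S h₁ u₁ n) (covEstST Z S h₂ u₂ n) =
      (#(spatialLagSet S h₁) * (n : ℝ))⁻¹ * (#(spatialLagSet S h₂) * (n : ℝ))⁻¹ *
        ∑ s₁ ∈ spatialLagSet S h₁, ∑ s₂ ∈ spatialLagSet S h₂,
          ∑ t₁ ∈ Icc 1 ((n : ℤ) - u₁), ∑ t₂ ∈ Icc 1 ((n : ℤ) - u₂),
            covRV P (lagProduct Z s₁ h₁ u₁ t₁) (lagProduct Z s₂ h₂ u₂ t₂) := by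
  have hest (h : ℝ × ℝ) (u : ℕ) : covEstST Z S h u n = fun ω =>
      (#(spatialLagSet S h) * (n : ℝ))⁻¹ *
        ∑ p ∈ spatialLagSet S h ×ˢ Icc 1 ((n : ℤ) - u), lagProduct Z p.1 h u p.2 ω := by
    funext ω
    rw [covEstST, sum_product]
    rfl
  have hL2 {h : ℝ × ℝ} {u : ℕ} {p : (ℝ × ℝ) × ℤ}
      (hp : p ∈ spatialLagSet S h ×ˢ Icc 1 ((n : ℤ) - u)) :=
    memLp_lagProduct hmom4 (mem_product.1 hp).1 u p.2
  rw [hest, hest, covRV_const_mul_const_mul,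
    covRV_sum_sum _ _ (fun p hp => (hL2 hp).integrable one_le_two)
      (fun p hp => (hL2 hp).integrable one_le_two)
      (fun p hp q hq => (hL2 hp).integrable_mul (hL2 hq))]
  simp_rw [sum_product]
  exact congrArg _ (sum_congr rfl fun s₁ _ => sum_comm)

theorem natCast_mul_covRV_covEstST [IsFiniteMeasure P] (hmeas : ∀ s t, Measurable (Z s t))
    (hstat : TimeStationary P S Z) (hmom4 : ∀ s ∈ S, ∀ t : ℤ, MemLp (Z s t) 4 P)
    (h₁ h₂ : ℝ × ℝ) (u₁ u₂ n : ℕ) :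
    (n : ℝ) * covRV P (covEstST Z S h₁ u₁ n) (covEstST Z S h₂ u₂ n) =
      (#(spatialLagSet S h₁) * (#(spatialLagSet S h₂) : ℝ))⁻¹ *
        ∑ s₁ ∈ spatialLagSet S h₁, ∑ s₂ ∈ spatialLagSet S h₂,
          (n : ℝ)⁻¹ * ∑ t₁ ∈ Icc 1 ((n : ℤ) - u₁), ∑ t₂ ∈ Icc 1 ((n : ℤ) - u₂),
            covRV P (fun ω => Z s₁ 0 ω * Z (s₁ + h₁) u₁ ω)
              (lagProduct Z s₂ h₂ u₂ (t₂ - t₁)) := by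
  have hshift : ∀ s₁ ∈ spatialLagSet S h₁, ∀ s₂ ∈ spatialLagSet S h₂, ∀ t₁ t₂,
      covRV P (lagProduct Z s₁ h₁ u₁ t₁) (lagProduct Z s₂ h₂ u₂ t₂) = _ :=
    fun s₁ hs₁ s₂ hs₂ => hstat.covRV_lagProduct hmeas hs₁ hs₂ u₁ u₂
  rw [covRV_covEstST hmom4, sum_congr rfl fun s₁ hs₁ => sum_congr rfl fun s₂ hs₂ => sum_congr rfl fun t₁ _ =>
    sum_congr rfl fun t₂ _ => hshift s₁ hs₁ s₂ hs₂ t₁ t₂]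
  simp_rw [← mul_sum, mul_inv]
  rcases eq_or_ne (n : ℝ) 0 with hn | hn
  · simp [hn]
  · field_simp

end RandomField

theorem asymptotic_covariance_matrix_fixed_space_general
    {Ω : Type*} [MeasurableSpace Ω] (P : Measure Ω) [IsProbabilityMeasure P]
    (S : Finset (ℝ × ℝ)) (Z : (ℝ × ℝ) → ℤ → Ω → ℝ)
    (hmeas : ∀ s t, Measurable (Z s t))
    (hstat : TimeStationary P S Z)
    (hmom4 : ∀ s ∈ S, ∀ t : ℤ, MemLp (Z s t) 4 P)
    (m : ℕ) (h : Fin m → ℝ × ℝ) (u : Fin m → ℕ)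
    (hsum : ∀ i j : Fin m, ∀ s₁ ∈ spatialLagSet S (h i), ∀ s₂ ∈ spatialLagSet S (h j),
      Summable (fun t : ℤ =>
        |covRV P (fun ω => Z s₁ 0 ω * Z (s₁ + h i) (u i : ℤ) ω)
          (fun ω => Z s₂ t ω * Z (s₂ + h j) (t + (u j : ℤ)) ω)|)) :
    ∀ i j : Fin m,
      Tendsto (fun n : ℕ => (n : ℝ) *
          covRV P (covEstST Z S (h i) (u i) n) (covEstST Z S (h j) (u j) n)) atTop
        (𝓝 ((((spatialLagSet S (h i)).card : ℝ) * ((spatialLagSet S (h j)).card : ℝ))⁻¹ *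
          ∑ s₁ ∈ spatialLagSet S (h i), ∑ s₂ ∈ spatialLagSet S (h j),
            ∑' t : ℤ, covRV P (fun ω => Z s₁ 0 ω * Z (s₁ + h i) (u i : ℤ) ω)
              (fun ω => Z s₂ t ω * Z (s₂ + h j) (t + (u j : ℤ)) ω))) := by
  intro i j
  simp_rw [natCast_mul_covRV_covEstST hmeas hstat hmom4]
  exact (tendsto_finsetSum _ fun s₁ hs₁ => tendsto_finsetSum _ fun s₂ hs₂ =>
    tendsto_inv_mul_sum_Icc_sum_Icc_sub (hsum i j s₁ hs₁ s₂ hs₂) (u i) (u j)).const_mul _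

/-- first part of Theorem 2. For a mean-zero random field on `S × ℤ`,
strictly stationary in time with space–time covariance function `C`, under absolute
summability in time of the covariances of products, `|Tₙ|·cov(Ĉₙ(hᵢ,uᵢ), Ĉₙ(hⱼ,uⱼ))`
converges to the stated triple sum for each pair of lags in `Λ`. -/
theorem asymptotic_covariance_matrix_fixed_space
    {Ω : Type*} [MeasurableSpace Ω] (P : Measure Ω) [IsProbabilityMeasure P]
    (S : Finset (ℝ × ℝ)) (Z : (ℝ × ℝ) → ℤ → Ω → ℝ)
    (hmeas : ∀ s t, Measurable (Z s t))
    (hstat : TimeStationary P S Z)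
    (hmean : ∀ s ∈ S, ∀ t : ℤ, ∫ ω, Z s t ω ∂P = 0)
    (hmom4 : ∀ s ∈ S, ∀ t : ℤ, MemLp (Z s t) 4 P)
    (C : (ℝ × ℝ) → ℤ → ℝ)
    (hcov : ∀ s h (t u : ℤ), s ∈ S → s + h ∈ S →
      covRV P (Z s t) (Z (s + h) (t + u)) = C h u)
    (m : ℕ) (h : Fin m → ℝ × ℝ) (u : Fin m → ℕ)
    (hne : ∀ i, (spatialLagSet S (h i)).Nonempty)
    (hsum : ∀ i j : Fin m, ∀ s₁ ∈ spatialLagSet S (h i), ∀ s₂ ∈ spatialLagSet S (h j),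
      Summable (fun t : ℤ =>
        |covRV P (fun ω => Z s₁ 0 ω * Z (s₁ + h i) (u i : ℤ) ω)
          (fun ω => Z s₂ t ω * Z (s₂ + h j) (t + (u j : ℤ)) ω)|)) :
    ∀ i j : Fin m,
      Tendsto (fun n : ℕ => (n : ℝ) *
          covRV P (covEstST Z S (h i) (u i) n) (covEstST Z S (h j) (u j) n)) atTop
        (𝓝 ((((spatialLagSet S (h i)).card : ℝ) * ((spatialLagSet S (h j)).card : ℝ))⁻¹ *
          ∑ s₁ ∈ spatialLagSet S (h i), ∑ s₂ ∈ spatialLagSet S (h j),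
            ∑' t : ℤ, covRV P (fun ω => Z s₁ 0 ω * Z (s₁ + h i) (u i : ℤ) ω)
              (fun ω => Z s₂ t ω * Z (s₂ + h j) (t + (u j : ℤ)) ω))) :=
  asymptotic_covariance_matrix_fixed_space_general P S Z hmeas hstat hmom4 m h u hsum
end
end

section
/- Let Z : ℤ^d → Ω → ℝ be a strictly stationary random field with mean μ = E[Z(0)], observed on finite index sets Dₙ ⊂ ℤ^d with |Dₙ| → ∞, and let Λ = {k₁,…,k_m} ⊂ ℤ^d be a finite set of lags. Let Z̄ₙ = (1/|Dₙ|) Σ_{x∈Dₙ} Z(x), and for k ∈ Λ define the μ-centered estimator Ĉₙ(k) = (1/|Dₙ(k)|) Σ_{x∈Dₙ(k)} (Z(x) − μ)(Z(x+k) − μ) and the mean-corrected estimator Ĉₙ*(k) = (1/|Dₙ(k)|) Σ_{x∈Dₙ(k)} (Z(x) − Z̄ₙ)(Z(x+k) − Z̄ₙ), with Ĝₙ = (Ĉₙ(kᵢ))ᵢ and Ĝₙ* = (Ĉₙ*(kᵢ))ᵢ. Suppose that √|Dₙ| (Ĝₙ − G) converges in distribution to N_m(0,Σ) and that √|Dₙ|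 (Z̄ₙ − μ) converges in distribution to N(0, σ²_{Z̄}) for some σ²_{Z̄} ≥ 0. Then √|Dₙ| (Ĝₙ* − G) also converges in distribution to N_m(0,Σ); that is, the mean-corrected vector of sample covariances has the same asymptotic distribution as the vector computed with known mean. -/
/-!
Expanding the products around `μ` gives `Ĉₙ*(k) − Ĉₙ(k) = (Z̄ₙ − μ)((Z̄ₙ − μ) − Tₙ(k))`, where
`Tₙ(k)` is the average over `Dₙ(k)` of `(Z(x) − μ) + (Z(x+k) − μ)`. After scaling by `√|Dₙ|`
this is `Wₙ Vₙ` with `Wₙ = √|Dₙ|(Z̄ₙ − μ)`, which converges in distribution, and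
`Vₙ = (Z̄ₙ − μ) − Tₙ(k)`. Up to sums over the boundary sets `Dₙ \ Dₙ(k)` and
`Dₙ \ (Dₙ(k) + k)`, which are `o(|Dₙ(k)|)` in `L¹` by stationarity, `Tₙ(k)` equals
`2 (|Dₙ|/|Dₙ(k)|)(Z̄ₙ − μ)`, so `Vₙ → 0` in probability. Slutsky's theorem makes `Wₙ Vₙ → 0`
in probability, so both estimators have the same limit law.
-/

open MeasureTheory ProbabilityTheory Filter Finset Topology

noncomputable section

/-- Cramér–Wold characterization of the centered Gaussian `N_m(0,S)` on `ℝ^m`. -/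
def IsCenteredGaussianCov {m : ℕ} (μ : Measure (Fin m → ℝ))
    (S : Matrix (Fin m) (Fin m) ℝ) : Prop :=
  IsProbabilityMeasure μ ∧ ∀ l : Fin m → ℝ,
    Measure.map (fun y => ∑ i, l i * y i) μ =
      gaussianReal 0 (Real.toNNReal (∑ i, ∑ j, l i * S i j * l j))

open scoped BoundedContinuousFunction

namespace MeasureTheory

variable {ι Ω Ω' E : Type*} {mΩ : MeasurableSpace Ω} {mΩ' : MeasurableSpace Ω'}
  {mE : MeasurableSpace E} {μ : Measure Ω} {l : Filter ι}

lemma tendstoInDistribution_id_iff [TopologicalSpace E] [OpensMeasurableSpace E]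
    [IsProbabilityMeasure μ] {X : ι → Ω → E} (hX : ∀ n, AEMeasurable (X n) μ)
    (ν : Measure E) [IsProbabilityMeasure ν] :
    TendstoInDistribution X l id (fun _ ↦ μ) ν ↔
      ∀ f : E →ᵇ ℝ, Tendsto (fun n ↦ ∫ ω, f (X n ω) ∂μ) l (𝓝 (∫ y, f y ∂ν)) := by
  have hmap : ∀ (f : E →ᵇ ℝ) n, ∫ y, f y ∂(μ.map (X n)) = ∫ ω, f (X n ω) ∂μ := fun f n ↦
    integral_map (hX n) f.continuous.aestronglyMeasurable
  refine ⟨fun h f ↦ ?_, fun h ↦ ⟨hX, aemeasurable_id, ?_⟩⟩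
  · have := ProbabilityMeasure.tendsto_iff_forall_integral_tendsto.mp h.tendsto f
    simpa [hmap] using this
  · refine ProbabilityMeasure.tendsto_iff_forall_integral_tendsto.mpr fun f ↦ ?_
    simpa [hmap] using h f

lemma TendstoInDistribution.tendstoInMeasure_const [PseudoMetricSpace E] [OpensMeasurableSpace E]
    [HasOuterApproxClosed E] [IsProbabilityMeasure μ] {P' : Measure Ω'}
    [IsProbabilityMeasure P'] {X : ι → Ω → E} {c : E}
    (h : TendstoInDistribution X l (fun _ ↦ c) (fun _ ↦ μ) P') :
    TendstoInMeasure μ X l (fun _ ↦ c) := by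
  rw [tendstoInMeasure_iff_dist]
  intro ε hε
  have hclosed : IsClosed {y : E | ε ≤ dist y c} :=
    isClosed_le continuous_const (continuous_id.dist continuous_const)
  have := ProbabilityMeasure.limsup_measure_closed_le_of_tendsto h.tendsto hclosed
  refine tendsto_of_le_liminf_of_limsup_le bot_le ((le_of_eq ?_).trans (this.trans_eq ?_))
  · congr with i
    exact (Measure.map_apply_of_aemeasurable (h.forall_aemeasurable i) hclosed.measurableSet).symm
  · simp [Measure.dirac_apply' c hclosed.measurableSet, hε.not_ge]

lemma TendstoInDistribution.mul_tendstoInMeasure_zero [l.IsCountablyGenerated]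
    [IsProbabilityMeasure μ] {P' : Measure Ω'} [IsProbabilityMeasure P']
    {W V : ι → Ω → ℝ} {Z : Ω' → ℝ} (hW : TendstoInDistribution W l Z (fun _ ↦ μ) P')
    (hV : TendstoInMeasure μ V l 0) (hVm : ∀ n, AEMeasurable (V n) μ) :
    TendstoInMeasure μ (fun n ω ↦ W n ω * V n ω) l 0 := by
  have h := hW.continuous_comp_prodMk_of_tendstoInMeasure_const
    (g := fun p : ℝ × ℝ ↦ p.1 * p.2) (c := 0) (by fun_prop) hV hVm
  simp only [mul_zero] at h
  exact h.tendstoInMeasure_const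

lemma TendstoInMeasure.add {F : Type*} [SeminormedAddCommGroup F]
    {f f' : ι → Ω → F} {g g' : Ω → F}
    (hf : TendstoInMeasure μ f l g) (hf' : TendstoInMeasure μ f' l g') :
    TendstoInMeasure μ (f + f') l (g + g') := by
  rw [tendstoInMeasure_iff_norm] at hf hf' ⊢
  intro ε hε
  have hsub : ∀ n, {x | ε ≤ ‖(f + f') n x - (g + g') x‖} ⊆
      {x | ε / 2 ≤ ‖f n x - g x‖} ∪ {x | ε / 2 ≤ ‖f' n x - g' x‖} := by
    intro n x hx
    by_contra! hlt
    simp only [Set.mem_union, Set.mem_ofPred_eq, not_or, not_le] at hlt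
    have := norm_add_le (f n x - g x) (f' n x - g' x)
    simp only [Set.mem_ofPred_eq, Pi.add_apply] at hx
    rw [add_sub_add_comm] at hx
    linarith [hlt.1, hlt.2]
  refine tendsto_of_tendsto_of_tendsto_of_le_of_le tendsto_const_nhds
    (by simpa using (hf _ (half_pos hε)).add (hf' _ (half_pos hε))) (fun n ↦ bot_le)
    (fun n ↦ (measure_mono (hsub n)).trans (measure_union_le _ _))

lemma tendstoInMeasure_pi {κ : Type*} [Fintype κ] {F : κ → Type*}
    [∀ i, PseudoEMetricSpace (F i)] {f : ι → Ω → (i : κ) → F i}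
    {g : Ω → (i : κ) → F i}
    (h : ∀ i, TendstoInMeasure μ (fun n x ↦ f n x i) l (fun x ↦ g x i)) :
    TendstoInMeasure μ f l g := by
  intro ε hε
  have hsub : ∀ n, {x | ε ≤ edist (f n x) (g x)} ⊆ ⋃ i, {x | ε ≤ edist (f n x i) (g x i)} := by
    intro n x hx
    by_contra! hlt
    simp only [Set.mem_iUnion, Set.mem_ofPred_eq, not_exists, not_le] at hlt
    simp only [Set.mem_ofPred_eq, edist_pi_def] at hx
    exact hx.not_gt ((Finset.sup_lt_iff hε).mpr fun i _ ↦ hlt i)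
  refine tendsto_of_tendsto_of_tendsto_of_le_of_le tendsto_const_nhds
    (by simpa using tendsto_finsetSum Finset.univ fun i _ ↦ h i ε hε) (fun n ↦ bot_le)
    (fun n ↦ (measure_mono (hsub n)).trans (measure_iUnion_fintype_le _ _))

lemma tendstoInMeasure_const_of_tendsto {F : Type*} [PseudoEMetricSpace F]
    {c : ι → F} {c₀ : F} (hc : Tendsto c l (𝓝 c₀)) :
    TendstoInMeasure μ (fun n _ ↦ c n) l (fun _ ↦ c₀) := by
  intro ε hε
  refine tendsto_const_nhds.congr' ?_
  filter_upwards [EMetric.tendsto_nhds.mp hc ε hε] with n hn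
  simp [hn.not_ge]

lemma tendstoInMeasure_mul_sum_of_eLpNorm_le {κ : Type*} {U : κ → Ω → ℝ} {C : ENNReal}
    (hC : C ≠ ⊤) (hUm : ∀ x, AEStronglyMeasurable (U x) μ) (hU : ∀ x, eLpNorm (U x) 1 μ ≤ C)
    {a : ι → ℝ} {S : ι → Finset κ} (h : Tendsto (fun n ↦ a n * #(S n)) l (𝓝 0)) :
    TendstoInMeasure μ (fun n ω ↦ a n * ∑ x ∈ S n, U x ω) l 0 := by
  refine tendstoInMeasure_of_tendsto_eLpNorm one_ne_zero
    (fun n ↦ (Finset.aestronglyMeasurable_fun_sum _ fun x _ ↦ hUm x).const_mul _)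
    aestronglyMeasurable_const ?_
  have hbound : ∀ n, eLpNorm (fun ω ↦ a n * ∑ x ∈ S n, U x ω) 1 μ ≤
      ENNReal.ofReal (|a n| * #(S n)) * C := by
    intro n
    have hfun : (fun ω ↦ a n * ∑ x ∈ S n, U x ω) = a n • ∑ x ∈ S n, U x := by
      ext ω; simp
    calc eLpNorm (fun ω ↦ a n * ∑ x ∈ S n, U x ω) 1 μ
        = ‖a n‖ₑ * eLpNorm (∑ x ∈ S n, U x) 1 μ := by rw [hfun, eLpNorm_const_smul]
      _ ≤ ‖a n‖ₑ * ∑ x ∈ S n, C := by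
          gcongr
          exact (eLpNorm_sum_le (fun x _ ↦ hUm x) le_rfl).trans (Finset.sum_le_sum fun x _ ↦ hU x)
      _ = ENNReal.ofReal (|a n| * #(S n)) * C := by
          rw [Finset.sum_const, nsmul_eq_mul, ← mul_assoc, Real.enorm_eq_ofReal_abs,
            ENNReal.ofReal_mul (abs_nonneg _), ENNReal.ofReal_natCast]
  have hlim : Tendsto (fun n ↦ ENNReal.ofReal (|a n| * #(S n)) * C) l (𝓝 0) := by
    have habs : Tendsto (fun n ↦ |a n| * #(S n)) l (𝓝 0) := by
      simpa [abs_mul] using h.abs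
    simpa using ENNReal.Tendsto.mul_const (ENNReal.tendsto_ofReal habs) (Or.inr hC)
  simpa using tendsto_of_tendsto_of_tendsto_of_le_of_le tendsto_const_nhds hlim
    (fun n ↦ bot_le) hbound

end MeasureTheory

def sampleMean {V : Type*} (D : Finset V) (z : V → ℝ) : ℝ :=
  (#D : ℝ)⁻¹ * ∑ x ∈ D, z x

/-- With `S = Dₙ(k)`, this is `Ĉₙ(k)` for `a = μ` and `Ĉₙ*(k)` for `a = Z̄ₙ`. -/
def sampleCov {V : Type*} [Add V] (S : Finset V) (k : V) (z : V → ℝ) (a : ℝ) : ℝ :=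
  (#S : ℝ)⁻¹ * ∑ x ∈ S, (z x - a) * (z (x + k) - a)

lemma sampleCov_sub_sampleCov {V : Type*} [Add V] {S : Finset V} (hS : S.Nonempty) (k : V)
    (z : V → ℝ) (a b : ℝ) :
    sampleCov S k z b - sampleCov S k z a =
      (b - a) * ((b - a) - (#S : ℝ)⁻¹ * ∑ x ∈ S, ((z x - a) + (z (x + k) - a))) := by
  have hsum : ∑ x ∈ S, (z x - b) * (z (x + k) - b) = ∑ x ∈ S, (z x - a) * (z (x + k) - a) -
      (b - a) * ∑ x ∈ S, ((z x - a) + (z (x + k) - a)) + #S * (b - a) ^ 2 := by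
    rw [Finset.mul_sum, ← Finset.sum_sub_distrib, ← nsmul_eq_mul, ← Finset.sum_const,
      ← Finset.sum_add_distrib]
    exact Finset.sum_congr rfl fun x _ ↦ by ring
  have hS' : (#S : ℝ) ≠ 0 := by exact_mod_cast hS.card_pos.ne'
  unfold sampleCov
  rw [hsum]
  field_simp
  ring

lemma sum_sub_eq_card_mul_sampleMean_sub {V : Type*} {D : Finset V} (hD : D.Nonempty)
    (z : V → ℝ) (a : ℝ) :
    ∑ x ∈ D, (z x - a) = #D * (sampleMean D z - a) := by
  have hD' : (#D : ℝ) ≠ 0 := by exact_mod_cast hD.card_pos.ne'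
  rw [Finset.sum_sub_distrib, Finset.sum_const, nsmul_eq_mul, sampleMean]
  field_simp

section LagSet

variable {d : ℕ} (D : Finset (Fin d → ℤ)) (k : Fin d → ℤ)

lemma lagSet_subset : lagSet D k ⊆ D := Finset.filter_subset _ _

lemma image_add_lagSet_subset : (lagSet D k).image (· + k) ⊆ D := by
  intro y hy
  obtain ⟨x, hx, rfl⟩ := Finset.mem_image.mp hy
  exact (Finset.mem_filter.mp hx).2

lemma card_sdiff_lagSet : (#(D \ lagSet D k) : ℝ) = #D - #(lagSet D k) := by
  rw [Finset.card_sdiff_of_subset (lagSet_subset D k),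
    Nat.cast_sub (Finset.card_le_card (lagSet_subset D k))]

lemma card_sdiff_image_add_lagSet :
    (#(D \ (lagSet D k).image (· + k)) : ℝ) = #D - #(lagSet D k) := by
  rw [Finset.card_sdiff_of_subset (image_add_lagSet_subset D k),
    Nat.cast_sub (Finset.card_le_card (image_add_lagSet_subset D k)),
    Finset.card_image_of_injective _ (add_left_injective k)]

lemma sum_lagSet_add_shift (w : (Fin d → ℤ) → ℝ) :
    ∑ x ∈ lagSet D k, (w x + w (x + k)) = 2 * ∑ x ∈ D, w x - ∑ x ∈ D \ lagSet D k, w x -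
      ∑ x ∈ D \ (lagSet D k).image (· + k), w x := by
  have hshift : ∑ x ∈ lagSet D k, w (x + k) = ∑ y ∈ (lagSet D k).image (· + k), w y :=
    (Finset.sum_image fun x _ y _ h ↦ add_left_injective k h).symm
  have hS := Finset.sum_sdiff (lagSet_subset D k) (f := w)
  have hS' := Finset.sum_sdiff (image_add_lagSet_subset D k) (f := w)
  rw [Finset.sum_add_distrib, hshift]
  linarith

variable {D k}

lemma sampleMean_sub_sub_lagAverage (hS : (lagSet D k).Nonempty) (z : (Fin d → ℤ) → ℝ) (a : ℝ) :
    sampleMean D z - a -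
        (#(lagSet D k) : ℝ)⁻¹ * ∑ x ∈ lagSet D k, ((z x - a) + (z (x + k) - a)) =
      √(#D : ℝ) * (sampleMean D z - a) * ((1 - 2 * (#D / #(lagSet D k))) / √(#D : ℝ)) +
        (#(lagSet D k) : ℝ)⁻¹ * ∑ x ∈ D \ lagSet D k, (z x - a) +
        (#(lagSet D k) : ℝ)⁻¹ * ∑ x ∈ D \ (lagSet D k).image (· + k), (z x - a) := by
  have hD : D.Nonempty := hS.mono (lagSet_subset D k)
  have hL : (#(lagSet D k) : ℝ) ≠ 0 := by exact_mod_cast hS.card_pos.ne'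
  have hN : √(#D : ℝ) ≠ 0 := Real.sqrt_ne_zero'.mpr (by exact_mod_cast hD.card_pos)
  rw [sum_lagSet_add_shift D k (fun x ↦ z x - a), sum_sub_eq_card_mul_sampleMean_sub hD]
  field_simp
  ring

end LagSet

section RandomField

variable {Ω : Type*} [MeasurableSpace Ω] {P : Measure Ω} {d : ℕ} {Z : (Fin d → ℤ) → Ω → ℝ}

lemma StrictlyStationary.identDistrib (hmeas : ∀ x, Measurable (Z x))
    (hstat : StrictlyStationary P Z) (x : Fin d → ℤ) : IdentDistrib (Z x) (Z 0) P P where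
  aemeasurable_fst := (hmeas x).aemeasurable
  aemeasurable_snd := (hmeas 0).aemeasurable
  map_eq := by
    have h := congrArg (Measure.map fun v : Fin 1 → ℝ ↦ v 0) (hstat 1 (fun _ ↦ 0) x)
    rwa [Measure.map_map (measurable_pi_apply 0) (measurable_pi_lambda _ fun _ ↦ hmeas _),
      Measure.map_map (measurable_pi_apply 0) (measurable_pi_lambda _ fun _ ↦ hmeas _),
      Function.comp_def, Function.comp_def, zero_add] at h

lemma StrictlyStationary.tendstoInMeasure_mul_sum_sub [IsFiniteMeasure P] {ι : Type*}
    {l : Filter ι} (hmeas : ∀ x, Measurable (Z x)) (hstat : StrictlyStationary P Z)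
    (h1 : MemLp (Z 0) 1 P) (c : ℝ) {a : ι → ℝ} {S : ι → Finset (Fin d → ℤ)}
    (h : Tendsto (fun n ↦ a n * #(S n)) l (𝓝 0)) :
    TendstoInMeasure P (fun n ω ↦ a n * ∑ x ∈ S n, (Z x ω - c)) l 0 :=
  tendstoInMeasure_mul_sum_of_eLpNorm_le (h1.sub (memLp_const c)).eLpNorm_ne_top
    (fun x ↦ ((hmeas x).sub_const c).aestronglyMeasurable)
    (fun x ↦ (((hstat.identDistrib hmeas x).comp (measurable_sub_const c)).eLpNorm_eq 1).le) h

variable [IsProbabilityMeasure P] (hmeas : ∀ x, Measurable (Z x))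
  (hstat : StrictlyStationary P Z) (h1 : MemLp (Z 0) 1 P) (c : ℝ)
  {D : ℕ → Finset (Fin d → ℤ)} (hcard : Tendsto (fun n ↦ (#(D n) : ℝ)) atTop atTop)
  {k : Fin d → ℤ} (hne : ∀ n, (lagSet (D n) k).Nonempty)
  (hrat : Tendsto (fun n ↦ (#(lagSet (D n) k) : ℝ) / #(D n)) atTop (𝓝 1))
  {ν : Measure ℝ} [IsProbabilityMeasure ν]
  (hW : TendstoInDistribution (fun n ω ↦ √(#(D n) : ℝ) * (sampleMean (D n) (Z · ω) - c)) atTop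
    id (fun _ ↦ P) ν)
include hmeas hstat h1 hcard hne hrat hW

lemma tendstoInMeasure_sampleMean_sub_sub_lagAverage :
    TendstoInMeasure P (fun n ω ↦ sampleMean (D n) (Z · ω) - c -
      (#(lagSet (D n) k) : ℝ)⁻¹ * ∑ x ∈ lagSet (D n) k, ((Z x ω - c) + (Z (x + k) ω - c)))
      atTop 0 := by
  have hNL : Tendsto (fun n ↦ (#(D n) : ℝ) / #(lagSet (D n) k)) atTop (𝓝 1) := by
    simpa using hrat.inv₀ one_ne_zero
  have hcoef : Tendsto (fun n ↦ (1 - 2 * ((#(D n) : ℝ) / #(lagSet (D n) k))) / √(#(D n) : ℝ))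
      atTop (𝓝 0) :=
    (tendsto_const_nhds.sub (hNL.const_mul 2)).div_atTop (Real.tendsto_sqrt_atTop.comp hcard)
  have hboundary : Tendsto (fun n ↦ (#(lagSet (D n) k) : ℝ)⁻¹ * (#(D n) - #(lagSet (D n) k)))
      atTop (𝓝 0) := by
    have h := hNL.sub_const 1
    rw [sub_self] at h
    refine h.congr fun n ↦ ?_
    have hL : (#(lagSet (D n) k) : ℝ) ≠ 0 := by exact_mod_cast (hne n).card_pos.ne'
    field_simp
  have h := ((hW.mul_tendstoInMeasure_zero (tendstoInMeasure_const_of_tendsto hcoef)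
      fun _ ↦ aemeasurable_const).add
    (hstat.tendstoInMeasure_mul_sum_sub hmeas h1 c
      (S := fun n ↦ D n \ lagSet (D n) k) (by simpa only [card_sdiff_lagSet] using hboundary))).add
    (hstat.tendstoInMeasure_mul_sum_sub hmeas h1 c
      (S := fun n ↦ D n \ (lagSet (D n) k).image (· + k))
      (by simpa only [card_sdiff_image_add_lagSet] using hboundary))
  rw [add_zero, add_zero] at h
  refine h.congr_left fun n ↦ ae_of_all _ fun ω ↦ ?_
  exact (sampleMean_sub_sub_lagAverage (hne n) (Z · ω) c).symm

lemma tendstoInMeasure_sqrt_mul_sampleCov_sub (γ : ℝ) :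
    TendstoInMeasure P (fun n ω ↦
      √(#(D n) : ℝ) * (sampleCov (lagSet (D n) k) k (Z · ω) (sampleMean (D n) (Z · ω)) - γ) -
        √(#(D n) : ℝ) * (sampleCov (lagSet (D n) k) k (Z · ω) c - γ)) atTop 0 := by
  refine (hW.mul_tendstoInMeasure_zero
    (tendstoInMeasure_sampleMean_sub_sub_lagAverage hmeas hstat h1 c hcard hne hrat hW)
    fun n ↦ ?_).congr_left fun n ↦ ae_of_all _ fun ω ↦ ?_
  · unfold sampleMean
    fun_prop
  · beta_reduce
    rw [← mul_sub, sub_sub_sub_cancel_right, sampleCov_sub_sampleCov (hne n)]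
    ring

end RandomField

theorem mean_corrected_estimator_same_limit_general
    {Ω : Type*} [MeasurableSpace Ω] (P : Measure Ω) [IsProbabilityMeasure P]
    {d : ℕ} (Z : (Fin d → ℤ) → Ω → ℝ)
    (hmeas : ∀ x, Measurable (Z x))
    (hstat : StrictlyStationary P Z)
    (hL2 : ∀ x, MemLp (Z x) 2 P)
    (μZ : ℝ)
    (D : ℕ → Finset (Fin d → ℤ))
    (hcard : Tendsto (fun n => ((D n).card : ℝ)) atTop atTop)
    (m : ℕ) (k : Fin m → (Fin d → ℤ))
    (hne : ∀ (i : Fin m) (n : ℕ), (lagSet (D n) (k i)).Nonempty)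
    (hrat : ∀ i : Fin m,
      Tendsto (fun n => ((lagSet (D n) (k i)).card : ℝ) / ((D n).card : ℝ)) atTop (𝓝 1))
    (Sig : Matrix (Fin m) (Fin m) ℝ)
    (μlim : Measure (Fin m → ℝ))
    (hGauss : IsCenteredGaussianCov μlim Sig)
    (hG : ∀ f : BoundedContinuousFunction (Fin m → ℝ) ℝ,
      Tendsto (fun n => ∫ ω, f (fun i => Real.sqrt ((D n).card) *
          ((((lagSet (D n) (k i)).card : ℝ)⁻¹ *
              ∑ x ∈ lagSet (D n) (k i), (Z x ω - μZ) * (Z (x + k i) ω - μZ)) -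
            covRV P (Z 0) (Z (k i)))) ∂P) atTop
        (𝓝 (∫ y, f y ∂μlim)))
    (σ2 : ℝ)
    (hmeanCLT : ∀ g : BoundedContinuousFunction ℝ ℝ,
      Tendsto (fun n => ∫ ω, g (Real.sqrt ((D n).card) *
          ((((D n).card : ℝ)⁻¹ * ∑ x ∈ D n, Z x ω) - μZ)) ∂P) atTop
        (𝓝 (∫ y, g y ∂(gaussianReal 0 (Real.toNNReal σ2))))) :
    ∀ f : BoundedContinuousFunction (Fin m → ℝ) ℝ,
      Tendsto (fun n => ∫ ω, f (fun i => Real.sqrt ((D n).card) *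
          ((((lagSet (D n) (k i)).card : ℝ)⁻¹ *
              ∑ x ∈ lagSet (D n) (k i),
                (Z x ω - (((D n).card : ℝ)⁻¹ * ∑ y ∈ D n, Z y ω)) *
                  (Z (x + k i) ω - (((D n).card : ℝ)⁻¹ * ∑ y ∈ D n, Z y ω))) -
            covRV P (Z 0) (Z (k i)))) ∂P) atTop
        (𝓝 (∫ y, f y ∂μlim)) := by
  have := hGauss.1
  have h1 : MemLp (Z 0) 1 P := (hL2 0).mono_exponent one_le_two
  have hXm : ∀ n, AEMeasurable (fun ω i ↦ √(#(D n) : ℝ) *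
      (sampleCov (lagSet (D n) (k i)) (k i) (Z · ω) μZ - covRV P (Z 0) (Z (k i)))) P := by
    unfold sampleCov; fun_prop
  have hWm : ∀ n, AEMeasurable (fun ω ↦ √(#(D n) : ℝ) * (sampleMean (D n) (Z · ω) - μZ)) P := by
    unfold sampleMean; fun_prop
  have hYm : ∀ n, AEMeasurable (fun ω i ↦ √(#(D n) : ℝ) * (sampleCov (lagSet (D n) (k i)) (k i)
      (Z · ω) (sampleMean (D n) (Z · ω)) - covRV P (Z 0) (Z (k i)))) P := by
    unfold sampleCov sampleMean; fun_prop
  have hX := (tendstoInDistribution_id_iff hXm μlim).mpr hG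
  have hW := (tendstoInDistribution_id_iff hWm _).mpr hmeanCLT
  refine (tendstoInDistribution_id_iff hYm μlim).mp
    (tendstoInDistribution_of_tendstoInMeasure_sub _ id hX (tendstoInMeasure_pi fun i ↦ ?_) hYm)
  exact tendstoInMeasure_sqrt_mul_sampleCov_sub hmeas hstat h1 μZ hcard (hne i) (hrat i) hW _

/-- Lemma A.6. If the vector of `μ`-centered sample covariances
satisfies `√|Dₙ|(Ĝₙ − G) →d N_m(0,Σ)` and the sample mean satisfies
`√|Dₙ|(Z̄ₙ − μ) →d N(0,σ²_{Z̄})`, then the mean-corrected vector of sample covariances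
satisfies `√|Dₙ|(Ĝₙ* − G) →d N_m(0,Σ)` as well. -/
theorem mean_corrected_estimator_same_limit
    {Ω : Type*} [MeasurableSpace Ω] (P : Measure Ω) [IsProbabilityMeasure P]
    {d : ℕ} (Z : (Fin d → ℤ) → Ω → ℝ)
    (hmeas : ∀ x, Measurable (Z x))
    (hstat : StrictlyStationary P Z)
    (hL2 : ∀ x, MemLp (Z x) 2 P)
    (μZ : ℝ) (hmu : μZ = ∫ ω, Z 0 ω ∂P)
    (D : ℕ → Finset (Fin d → ℤ))
    (hcard : Tendsto (fun n => ((D n).card : ℝ)) atTop atTop)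
    (m : ℕ) (k : Fin m → (Fin d → ℤ))
    (hne : ∀ (i : Fin m) (n : ℕ), (lagSet (D n) (k i)).Nonempty)
    (hrat : ∀ i : Fin m,
      Tendsto (fun n => ((lagSet (D n) (k i)).card : ℝ) / ((D n).card : ℝ)) atTop (𝓝 1))
    (Sig : Matrix (Fin m) (Fin m) ℝ)
    (μlim : Measure (Fin m → ℝ))
    (hGauss : IsCenteredGaussianCov μlim Sig)
    (hG : ∀ f : BoundedContinuousFunction (Fin m → ℝ) ℝ,
      Tendsto (fun n => ∫ ω, f (fun i => Real.sqrt ((D n).card) *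
          ((((lagSet (D n) (k i)).card : ℝ)⁻¹ *
              ∑ x ∈ lagSet (D n) (k i), (Z x ω - μZ) * (Z (x + k i) ω - μZ)) -
            covRV P (Z 0) (Z (k i)))) ∂P) atTop
        (𝓝 (∫ y, f y ∂μlim)))
    (σ2 : ℝ) (hσ2 : 0 ≤ σ2)
    (hmeanCLT : ∀ g : BoundedContinuousFunction ℝ ℝ,
      Tendsto (fun n => ∫ ω, g (Real.sqrt ((D n).card) *
          ((((D n).card : ℝ)⁻¹ * ∑ x ∈ D n, Z x ω) - μZ)) ∂P) atTop
        (𝓝 (∫ y, g y ∂(gaussianReal 0 (Real.toNNReal σ2))))) :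
    ∀ f : BoundedContinuousFunction (Fin m → ℝ) ℝ,
      Tendsto (fun n => ∫ ω, f (fun i => Real.sqrt ((D n).card) *
          ((((lagSet (D n) (k i)).card : ℝ)⁻¹ *
              ∑ x ∈ lagSet (D n) (k i),
                (Z x ω - (((D n).card : ℝ)⁻¹ * ∑ y ∈ D n, Z y ω)) *
                  (Z (x + k i) ω - (((D n).card : ℝ)⁻¹ * ∑ y ∈ D n, Z y ω))) -
            covRV P (Z 0) (Z (k i)))) ∂P) atTop
        (𝓝 (∫ y, f y ∂μlim)) :=
  mean_corrected_estimator_same_limit_general P Z hmeas hstat hL2 μZ D hcard m k hne hrat Sig μlim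
    hGauss hG σ2 hmeanCLT
end
end

section
/- Let f : ℤ^d → ℝ satisfy Σ_{v∈ℤ^d} |f(v)| < ∞. Let Aₙ, Bₙ ⊂ ℤ^d be finite nonempty sets and Nₙ positive reals such that Nₙ/|Aₙ| → 1, Nₙ/|Bₙ| → 1, and for every fixed v ∈ ℤ^d, |Aₙ ∩ (Bₙ − v)| / Nₙ → 1 as n → ∞. Then Nₙ · (1/(|Aₙ| |Bₙ|)) Σ_{x∈Aₙ} Σ_{y∈Bₙ} f(y − x) → Σ_{v∈ℤ^d} f(v) as n → ∞. -/
/-!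
Grouping the pairs `(x, y) ∈ Aₙ × Bₙ` by their difference `v = y - x` turns the double sum into
`∑' v, |Aₙ ∩ (Bₙ - v)| • f v`. After normalisation the weights `|Aₙ ∩ (Bₙ - v)| / Nₙ` tend to `1`
for each `v` and are bounded by `|Aₙ| / Nₙ → 1`, so dominated convergence for series gives the
limit `∑' v, f v`, and the remaining factors `Nₙ / |Aₙ|` and `Nₙ / |Bₙ|` tend to `1`.
-/

open Filter Finset Topology

section Overlap

variable {G : Type*} [AddCommGroup G] [DecidableEq G]

def overlapCard (A B : Finset G) (v : G) : ℕ := #(A ∩ B.image (· - v))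

lemma card_filter_sub_eq_overlapCard (A B : Finset G) (v : G) :
    #{p ∈ A ×ˢ B | p.2 - p.1 = v} = overlapCard A B v := by
  unfold overlapCard
  refine card_nbij' Prod.fst (fun x => (x, x + v)) ?_ ?_ ?_ ?_ <;>
    intro p <;> simp [sub_eq_iff_eq_add] <;> grind

lemma overlapCard_eq_zero {A B : Finset G} {v : G}
    (hv : v ∉ (A ×ˢ B).image fun p => p.2 - p.1) : overlapCard A B v = 0 := by
  rw [← card_filter_sub_eq_overlapCard, card_eq_zero, filter_eq_empty_iff]
  exact fun p hp hpv => hv (mem_image.2 ⟨p, hp, hpv⟩)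

lemma sum_sum_sub_eq_tsum_overlapCard_smul {M : Type*} [AddCommMonoid M] [TopologicalSpace M]
    (A B : Finset G) (f : G → M) :
    ∑ x ∈ A, ∑ y ∈ B, f (y - x) = ∑' v, overlapCard A B v • f v := by
  rw [tsum_eq_sum (s := (A ×ˢ B).image fun p => p.2 - p.1)
      fun v hv => by rw [overlapCard_eq_zero hv, zero_smul],
    ← sum_product' (f := fun x y => f (y - x)),
    ← sum_fiberwise_of_maps_to fun p hp => mem_image_of_mem (fun p => p.2 - p.1) hp]
  refine sum_congr rfl fun v _ => ?_
  rw [sum_congr rfl fun p hp => congrArg f (mem_filter.1 hp).2, sum_const,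
    card_filter_sub_eq_overlapCard]

end Overlap

lemma tendsto_tsum_smul_of_tendsto_one {α ι E : Type*} [NormedAddCommGroup E] [NormedSpace ℝ E]
    [CompleteSpace E] {l : Filter α} {f : ι → E} (hf : Summable fun v => ‖f v‖)
    {w : α → ι → ℝ} {C : ℝ} (hwC : ∀ᶠ n in l, ∀ v, |w n v| ≤ C)
    (hw : ∀ v, Tendsto (w · v) l (𝓝 1)) :
    Tendsto (fun n => ∑' v, w n v • f v) l (𝓝 (∑' v, f v)) := by
  refine tendsto_tsum_of_dominated_convergence (hf.mul_left C)
    (fun v => by simpa using (hw v).smul_const (f v)) ?_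
  filter_upwards [hwC] with n hn v
  rw [norm_smul, Real.norm_eq_abs]
  exact mul_le_mul_of_nonneg_right (hn v) (norm_nonneg _)

theorem normalized_double_sum_limit_general
    {d : ℕ} (f : (Fin d → ℤ) → ℝ) (hf : Summable (fun v => |f v|))
    (A B : ℕ → Finset (Fin d → ℤ)) (N : ℕ → ℝ)
    (hN : ∀ n, 0 < N n)
    (hNA : Tendsto (fun n => N n / ((A n).card : ℝ)) atTop (𝓝 1))
    (hNB : Tendsto (fun n => N n / ((B n).card : ℝ)) atTop (𝓝 1))
    (hcap : ∀ v : Fin d → ℤ,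
      Tendsto (fun n => (((A n) ∩ ((B n).image (· - v))).card : ℝ) / N n) atTop (𝓝 1)) :
    Tendsto (fun n => N n * ((((A n).card : ℝ) * ((B n).card : ℝ))⁻¹ *
        ∑ x ∈ A n, ∑ y ∈ B n, f (y - x))) atTop (𝓝 (∑' v : Fin d → ℤ, f v)) := by
  have hAN : Tendsto (fun n => ((A n).card : ℝ) / N n) atTop (𝓝 1) := by
    simpa using hNA.inv₀ one_ne_zero
  have hw_le : ∀ᶠ n in atTop, ∀ v, |(overlapCard (A n) (B n) v : ℝ) / N n| ≤ 2 := by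
    filter_upwards [hAN.eventually_lt_const one_lt_two] with n hn v
    rw [abs_of_nonneg (div_nonneg (Nat.cast_nonneg _) (hN n).le)]
    refine le_trans ?_ hn.le
    gcongr
    · exact (hN n).le
    · exact card_le_card inter_subset_left
  have hS := tendsto_tsum_smul_of_tendsto_one (f := f) hf hw_le hcap
  have hrw : ∀ n, N n * ((((A n).card : ℝ) * ((B n).card : ℝ))⁻¹ *
        ∑ x ∈ A n, ∑ y ∈ B n, f (y - x))
      = N n / (A n).card * (N n / (B n).card) *
          ∑' v, ((overlapCard (A n) (B n) v : ℝ) / N n) • f v := by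
    intro n
    simp only [sum_sum_sub_eq_tsum_overlapCard_smul, smul_eq_mul, nsmul_eq_mul, div_mul_eq_mul_div,
      tsum_div_const]
    field_simp [(hN n).ne']
  simp_rw [hrw]
  simpa using (hNA.mul hNB).mul hS

/-- limiting device. If `f` is absolutely summable on `ℤ^d` and the
finite sets `Aₙ, Bₙ` and normalizers `Nₙ` satisfy `Nₙ/|Aₙ| → 1`, `Nₙ/|Bₙ| → 1` and
`|Aₙ ∩ (Bₙ − v)|/Nₙ → 1` for every `v`, then
`Nₙ · (1/(|Aₙ||Bₙ|)) ∑_{x∈Aₙ} ∑_{y∈Bₙ} f(y−x) → ∑_{v∈ℤ^d} f(v)`. -/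
theorem normalized_double_sum_limit
    {d : ℕ} (f : (Fin d → ℤ) → ℝ) (hf : Summable (fun v => |f v|))
    (A B : ℕ → Finset (Fin d → ℤ)) (N : ℕ → ℝ)
    (hA : ∀ n, (A n).Nonempty) (hB : ∀ n, (B n).Nonempty) (hN : ∀ n, 0 < N n)
    (hNA : Tendsto (fun n => N n / ((A n).card : ℝ)) atTop (𝓝 1))
    (hNB : Tendsto (fun n => N n / ((B n).card : ℝ)) atTop (𝓝 1))
    (hcap : ∀ v : Fin d → ℤ,
      Tendsto (fun n => (((A n) ∩ ((B n).image (· - v))).card : ℝ) / N n) atTop (𝓝 1)) :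
    Tendsto (fun n => N n * ((((A n).card : ℝ) * ((B n).card : ℝ))⁻¹ *
        ∑ x ∈ A n, ∑ y ∈ B n, f (y - x))) atTop (𝓝 (∑' v : Fin d → ℤ, f v)) :=
  normalized_double_sum_limit_general f hf A B N hN hNA hNB hcap
end

section
/- Let Z : ℤ^d → Ω → ℝ be a measurable random field whose strong mixing coefficients satisfy sup_b α_b(r)/b ≤ K r^{−ε} for all r ≥ 1, for some constants K < ∞ and ε > 0. Let E₁,…,E_k ⊂ ℤ^d be finite sets with |Eᵢ| ≤ b for each i and pairwise distances d(Eᵢ,Eⱼ) ≥ r ≥ 1 for i ≠ j, and let U₁,…,U_k be complex-valued random variables with Uᵢ measurable with respect to 𝔉(Eᵢ) and |Uᵢ| ≤ 1 almost surely. Then |E[∏_{i=1}^k Uᵢ] − ∏_{i=1}^k E[Uᵢ]| ≤ 16 K b r^{−ε} · k(k−1)/2. -/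
/-!
Let `X`, `Y` be bounded by `1` and measurable for `𝔉₁`, `𝔉₂`, and let `α` bound
`|P(A ∩ B) - P(A)P(B)|` over `A ∈ 𝔉₁`, `B ∈ 𝔉₂`. Pulling `X` out of a conditional expectation
gives `cov(X, Y) = E[X · E[Y - EY | 𝔉₁]]`, and a centred real variable has `L¹` norm twice its
integral over the set where it is nonnegative; applied to the real and imaginary parts of
`E[Y - EY | 𝔉₁]` this gives `|cov(X, Y)| ≤ 2|cov(1_A, Y)| + 2|cov(1_B, Y)|` with `A, B ∈ 𝔉₁`.
The same step on the side of `Y` leaves only indicators, so `|cov(X, Y)| ≤ 16 α`.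

Splitting off one factor at a time, `E[∏ Uᵢ] - ∏ E[Uᵢ]` is a sum of covariances of one `U_a`
with the product of `j` further factors, `j < k`; these depend on at most `j b` sites at distance
`≥ r` from `E_a`, so each term is at most `16 K j b r^{-ε}`.
-/

open MeasureTheory ProbabilityTheory Filter Finset Topology

noncomputable section

/-- The σ-algebra `𝔉(E)` generated by `{Z(x) : x ∈ E}`. -/
def fieldSigma {Ω : Type*} [MeasurableSpace Ω] {d : ℕ} (Z : (Fin d → ℤ) → Ω → ℝ)
    (E : Set (Fin d → ℤ)) : MeasurableSpace Ω :=
  ⨆ x ∈ E, MeasurableSpace.comap (Z x) inferInstance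

/-- The strong mixing coefficient `α_b(r)` of the random field `Z`. -/
def mixCoef {Ω : Type*} [MeasurableSpace Ω] (P : Measure Ω) {d : ℕ}
    (Z : (Fin d → ℤ) → Ω → ℝ) (b r : ℕ) : ℝ :=
  sSup {x : ℝ | ∃ (E₁ E₂ : Finset (Fin d → ℤ)) (A₁ A₂ : Set Ω),
    E₁.card ≤ b ∧ E₂.card ≤ b ∧
    (∀ x₁ ∈ E₁, ∀ x₂ ∈ E₂, r ≤ Finset.univ.sup (fun j => (x₁ j - x₂ j).natAbs)) ∧
    MeasurableSet[fieldSigma Z ↑E₁] A₁ ∧ MeasurableSet[fieldSigma Z ↑E₂] A₂ ∧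
    x = |(P (A₁ ∩ A₂)).toReal - (P A₁).toReal * (P A₂).toReal|}

namespace MeasureTheory

variable {Ω : Type*} [MeasurableSpace Ω]

lemma integral_abs_eq_two_mul_setIntegral_nonneg {μ : Measure Ω} {f : Ω → ℝ}
    (hf : Integrable f μ) (hfm : Measurable f) (h0 : ∫ ω, f ω ∂μ = 0) :
    ∫ ω, |f ω| ∂μ = 2 * ∫ ω in {ω | 0 ≤ f ω}, f ω ∂μ := by
  have hA : MeasurableSet {ω | 0 ≤ f ω} := measurableSet_le measurable_const hfm
  have habs : ∀ ω, |f ω| = 2 * {ω | 0 ≤ f ω}.indicator f ω - f ω := fun ω => by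
    by_cases h : 0 ≤ f ω
    · rw [abs_of_nonneg h, Set.indicator_of_mem (by exact h)]; ring
    · rw [abs_of_neg (not_le.mp h), Set.indicator_of_notMem (by exact h)]; ring
  simp only [habs]
  rw [integral_sub ((hf.indicator hA).const_mul 2) hf, integral_const_mul, integral_indicator hA,
    h0, sub_zero]

end MeasureTheory

namespace ProbabilityTheory

variable {Ω : Type*} {m m₁ m₂ : MeasurableSpace Ω} [m₀ : MeasurableSpace Ω]

-- The paper's `cov`: bilinear, without complex conjugation.
def complexCov (μ : Measure Ω) (X Y : Ω → ℂ) : ℂ :=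
  ∫ ω, X ω * Y ω ∂μ - (∫ ω, X ω ∂μ) * ∫ ω, Y ω ∂μ

section

variable {μ : Measure Ω}

lemma complexCov_comm (X Y : Ω → ℂ) : complexCov μ X Y = complexCov μ Y X := by
  simp only [complexCov, mul_comm]

lemma complexCov_indicator_one_left {A : Set Ω} (hA : MeasurableSet A) (Y : Ω → ℂ) :
    complexCov μ (A.indicator 1) Y = ∫ ω in A, Y ω ∂μ - μ.real A * ∫ ω, Y ω ∂μ := by
  have hmul : ∀ ω, A.indicator 1 ω * Y ω = A.indicator Y ω := fun ω => by
    by_cases h : ω ∈ A <;> simp [h]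
  simp only [complexCov, hmul, integral_indicator hA, Pi.one_apply, setIntegral_const,
    Complex.real_smul, mul_one]

lemma complexCov_indicator_one {A B : Set Ω} (hA : MeasurableSet A) (hB : MeasurableSet B) :
    complexCov μ (A.indicator 1) (B.indicator 1) = ↑(μ.real (A ∩ B) - μ.real A * μ.real B) := by
  simp only [complexCov_indicator_one_left hA, setIntegral_indicator hB, integral_indicator hB,
    Pi.one_apply, setIntegral_const, Complex.real_smul, mul_one]
  push_cast
  ring

end

variable {P : Measure Ω} [IsProbabilityMeasure P]

lemma complexCov_eq_integral_mul_condExp (hm : m ≤ m₀) {X Y : Ω → ℂ}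
    (hX : Measurable[m] X) (hXb : ∀ᵐ ω ∂P, ‖X ω‖ ≤ 1) (hY : Integrable Y P) :
    complexCov P X Y = ∫ ω, X ω * P[fun ω => Y ω - ∫ ω', Y ω' ∂P | m] ω ∂P := by
  have hXm₀ : Measurable X := hX.mono hm le_rfl
  have hXint : Integrable X P := (integrable_const 1).mono' hXm₀.aestronglyMeasurable hXb
  have hY' : Integrable (fun ω => Y ω - ∫ ω', Y ω' ∂P) P := hY.sub (integrable_const _)
  have hcentre : complexCov P X Y = ∫ ω, X ω * (Y ω - ∫ ω', Y ω' ∂P) ∂P := by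
    simp only [mul_sub]
    rw [integral_sub (hY.bdd_mul hXm₀.aestronglyMeasurable hXb) (hXint.mul_const _),
      integral_mul_const, complexCov]
  rw [hcentre, ← integral_condExp hm]
  exact integral_congr_ae (condExp_stronglyMeasurable_bilin_of_bound
    (ContinuousLinearMap.mul ℝ ℂ) hm hX.stronglyMeasurable hY' 1 hXb)

lemma exists_integral_abs_clm_condExp_le (hm : m ≤ m₀) (L : ℂ →L[ℝ] ℝ)
    (hL : ∀ z, |L z| ≤ ‖z‖) {Y : Ω → ℂ} (hY : Integrable Y P) :
    ∃ A, MeasurableSet[m] A ∧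
      ∫ ω, |L (P[fun ω => Y ω - ∫ ω', Y ω' ∂P | m] ω)| ∂P ≤
        2 * ‖complexCov P (A.indicator 1) Y‖ := by
  set Y' : Ω → ℂ := fun ω => Y ω - ∫ ω', Y ω' ∂P
  have hY' : Integrable Y' P := hY.sub (integrable_const _)
  set f : Ω → ℝ := fun ω => L (P[Y' | m] ω)
  have hfm : Measurable[m] f := L.continuous.measurable.comp stronglyMeasurable_condExp.measurable
  have hf0 : ∫ ω, f ω ∂P = 0 := by
    rw [L.integral_comp_comm integrable_condExp, integral_condExp hm,
      integral_sub hY (integrable_const _), integral_const, probReal_univ, one_smul, sub_self,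
      map_zero]
  have hA : MeasurableSet[m] {ω | 0 ≤ f ω} := measurableSet_le measurable_const hfm
  refine ⟨_, hA, ?_⟩
  have hsetIntegral : ∫ ω in {ω | 0 ≤ f ω}, f ω ∂P =
      L (complexCov P ({ω | 0 ≤ f ω}.indicator 1) Y) := by
    rw [L.integral_comp_comm integrable_condExp.integrableOn, setIntegral_condExp hm hY' hA,
      complexCov_indicator_one_left (hm _ hA), integral_sub hY.integrableOn integrableOn_const,
      setIntegral_const, Complex.real_smul]
  rw [integral_abs_eq_two_mul_setIntegral_nonneg (L.integrable_comp integrable_condExp)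
    (hfm.mono hm le_rfl) hf0, hsetIntegral]
  exact mul_le_mul_of_nonneg_left ((le_abs_self _).trans (hL _)) zero_le_two

lemma exists_norm_complexCov_le (hm : m ≤ m₀) {X Y : Ω → ℂ}
    (hX : Measurable[m] X) (hXb : ∀ᵐ ω ∂P, ‖X ω‖ ≤ 1) (hY : Integrable Y P) :
    ∃ A B, MeasurableSet[m] A ∧ MeasurableSet[m] B ∧ ‖complexCov P X Y‖ ≤
      2 * ‖complexCov P (A.indicator 1) Y‖ + 2 * ‖complexCov P (B.indicator 1) Y‖ := by
  obtain ⟨A, hA, hre⟩ :=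
    exists_integral_abs_clm_condExp_le hm Complex.reCLM Complex.abs_re_le_norm hY
  obtain ⟨B, hB, him⟩ :=
    exists_integral_abs_clm_condExp_le hm Complex.imCLM Complex.abs_im_le_norm hY
  refine ⟨A, B, hA, hB, ?_⟩
  set g := P[fun ω => Y ω - ∫ ω', Y ω' ∂P | m]
  have hg : Integrable g P := integrable_condExp
  have hbound : ∀ᵐ ω ∂P, ‖X ω * g ω‖ ≤ |(g ω).re| + |(g ω).im| := by
    filter_upwards [hXb] with ω hω
    rw [norm_mul]
    exact (mul_le_of_le_one_left (norm_nonneg _) hω).trans (Complex.norm_le_abs_re_add_abs_im _)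
  have hre_int : Integrable (fun ω => |(g ω).re|) P := (Complex.reCLM.integrable_comp hg).abs
  have him_int : Integrable (fun ω => |(g ω).im|) P := (Complex.imCLM.integrable_comp hg).abs
  calc ‖complexCov P X Y‖
      ≤ ∫ ω, (|(g ω).re| + |(g ω).im|) ∂P := by
        rw [complexCov_eq_integral_mul_condExp hm hX hXb hY]
        exact norm_integral_le_of_norm_le (hre_int.add him_int) hbound
    _ = ∫ ω, |(g ω).re| ∂P + ∫ ω, |(g ω).im| ∂P := integral_add hre_int him_int
    _ ≤ _ := add_le_add hre him

section Mixing

variable (hm₁ : m₁ ≤ m₀) (hm₂ : m₂ ≤ m₀) {α : ℝ}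
  (hα : ∀ A B, MeasurableSet[m₁] A → MeasurableSet[m₂] B →
    |P.real (A ∩ B) - P.real A * P.real B| ≤ α)
include hm₁ hm₂ hα

lemma norm_complexCov_indicator_le_of_mixing {A : Set Ω} (hA : MeasurableSet[m₁] A)
    {Y : Ω → ℂ} (hY : Measurable[m₂] Y) (hYb : ∀ᵐ ω ∂P, ‖Y ω‖ ≤ 1) :
    ‖complexCov P (A.indicator 1) Y‖ ≤ 4 * α := by
  have hA_int : Integrable (A.indicator (1 : Ω → ℂ)) P :=
    (integrable_const 1).indicator (hm₁ _ hA)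
  obtain ⟨B, B', hB, hB', h⟩ := exists_norm_complexCov_le (P := P) hm₂ hY hYb hA_int
  have hpair : ∀ B, MeasurableSet[m₂] B → ‖complexCov P (B.indicator 1) (A.indicator 1)‖ ≤ α :=
    fun B hB => by
      rw [complexCov_comm, complexCov_indicator_one (hm₁ _ hA) (hm₂ _ hB), Complex.norm_real,
        Real.norm_eq_abs]
      exact hα A B hA hB
  rw [complexCov_comm]
  linarith [hpair B hB, hpair B' hB']

theorem norm_complexCov_le_of_mixing {X Y : Ω → ℂ}
    (hX : Measurable[m₁] X) (hXb : ∀ᵐ ω ∂P, ‖X ω‖ ≤ 1)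
    (hY : Measurable[m₂] Y) (hYb : ∀ᵐ ω ∂P, ‖Y ω‖ ≤ 1) :
    ‖complexCov P X Y‖ ≤ 16 * α := by
  have hY_int : Integrable Y P :=
    (integrable_const 1).mono' (hY.mono hm₂ le_rfl).aestronglyMeasurable hYb
  obtain ⟨A, A', hA, hA', h⟩ := exists_norm_complexCov_le hm₁ hX hXb hY_int
  linarith [norm_complexCov_indicator_le_of_mixing hm₁ hm₂ hα hA hY hYb,
    norm_complexCov_indicator_le_of_mixing hm₁ hm₂ hα hA' hY hYb]

end Mixing

theorem norm_integral_prod_sub_prod_integral_le {ι : Type*} (s : Finset ι)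
    {U : ι → Ω → ℂ} (hU : ∀ i, ‖∫ ω, U i ω ∂P‖ ≤ 1) {C : ℝ}
    (hcov : ∀ a t, a ∉ t → t.Nonempty →
      ‖complexCov P (U a) (fun ω => ∏ i ∈ t, U i ω)‖ ≤ C * t.card) :
    ‖∫ ω, ∏ i ∈ s, U i ω ∂P - ∏ i ∈ s, ∫ ω, U i ω ∂P‖ ≤
      C * ((s.card : ℝ) * ((s.card : ℝ) - 1) / 2) := by
  classical
  induction s using Finset.induction_on with
  | empty => simp
  | insert a t ha ih =>
    rcases t.eq_empty_or_nonempty with rfl | ht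
    · simp
    have hsplit : ∫ ω, ∏ i ∈ insert a t, U i ω ∂P - ∏ i ∈ insert a t, ∫ ω, U i ω ∂P =
        complexCov P (U a) (fun ω => ∏ i ∈ t, U i ω) +
          (∫ ω, U a ω ∂P) * (∫ ω, ∏ i ∈ t, U i ω ∂P - ∏ i ∈ t, ∫ ω, U i ω ∂P) := by
      simp only [Finset.prod_insert ha, complexCov]
      ring
    calc _ ≤ C * t.card + 1 * (C * ((t.card : ℝ) * ((t.card : ℝ) - 1) / 2)) := by
          rw [hsplit]
          refine (norm_add_le _ _).trans (add_le_add (hcov a t ha ht) ?_)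
          rw [norm_mul]
          exact mul_le_mul (hU a) ih (norm_nonneg _) zero_le_one
      _ = _ := by
          rw [Finset.card_insert_of_notMem ha]
          push_cast
          ring

end ProbabilityTheory

lemma ae_norm_prod_le_one {Ω ι : Type*} [MeasurableSpace Ω] {μ : Measure Ω} {U : ι → Ω → ℂ}
    (hU : ∀ i, ∀ᵐ ω ∂μ, ‖U i ω‖ ≤ 1) (t : Finset ι) : ∀ᵐ ω ∂μ, ‖∏ i ∈ t, U i ω‖ ≤ 1 := by
  filter_upwards [(eventually_all_finset t).2 fun i _ => hU i] with ω hω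
  rw [norm_prod]
  exact prod_le_one (fun i _ => norm_nonneg _) hω

section RandomField

variable {Ω : Type*} [m₀ : MeasurableSpace Ω] {d : ℕ} {Z : (Fin d → ℤ) → Ω → ℝ}

lemma fieldSigma_le (hZ : ∀ x, Measurable (Z x)) (E : Set (Fin d → ℤ)) : fieldSigma Z E ≤ m₀ :=
  iSup₂_le fun x _ => (hZ x).comap_le

lemma fieldSigma_mono {E F : Set (Fin d → ℤ)} (h : E ⊆ F) : fieldSigma Z E ≤ fieldSigma Z F :=
  biSup_mono h

lemma measurable_prod_fieldSigma_biUnion {ι : Type*} [DecidableEq ι]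
    {E : ι → Finset (Fin d → ℤ)} {U : ι → Ω → ℂ} (hU : ∀ i, Measurable[fieldSigma Z ↑(E i)] (U i))
    (t : Finset ι) : Measurable[fieldSigma Z ↑(t.biUnion E)] (fun ω => ∏ i ∈ t, U i ω) :=
  Finset.measurable_prod t fun i hi =>
    (hU i).mono (fieldSigma_mono (coe_subset.mpr (subset_biUnion_of_mem E hi))) le_rfl

lemma abs_measureReal_inter_sub_le_mixCoef {P : Measure Ω} [IsProbabilityMeasure P] {b r : ℕ}
    {E₁ E₂ : Finset (Fin d → ℤ)} (h₁ : E₁.card ≤ b) (h₂ : E₂.card ≤ b)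
    (hdist : ∀ x₁ ∈ E₁, ∀ x₂ ∈ E₂, r ≤ Finset.univ.sup (fun j => (x₁ j - x₂ j).natAbs))
    {A₁ A₂ : Set Ω} (hA₁ : MeasurableSet[fieldSigma Z ↑E₁] A₁)
    (hA₂ : MeasurableSet[fieldSigma Z ↑E₂] A₂) :
    |P.real (A₁ ∩ A₂) - P.real A₁ * P.real A₂| ≤ mixCoef P Z b r := by
  refine le_csSup ⟨1, ?_⟩ ⟨E₁, E₂, A₁, A₂, h₁, h₂, hdist, hA₁, hA₂, rfl⟩
  rintro _ ⟨-, -, B₁, B₂, -, -, -, -, -, rfl⟩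
  exact abs_sub_le_of_nonneg_of_le measureReal_nonneg measureReal_le_one
    (mul_nonneg measureReal_nonneg measureReal_nonneg)
    (mul_le_one₀ measureReal_le_one measureReal_nonneg measureReal_le_one)

lemma abs_measureReal_inter_sub_le_mixCoef_biUnion {P : Measure Ω} [IsProbabilityMeasure P]
    {ι : Type*} [DecidableEq ι] {E : ι → Finset (Fin d → ℤ)} {b r : ℕ}
    (hEcard : ∀ i, (E i).card ≤ b)
    (hEdist : ∀ i j, i ≠ j →
      ∀ x₁ ∈ E i, ∀ x₂ ∈ E j, r ≤ Finset.univ.sup (fun l => (x₁ l - x₂ l).natAbs))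
    {a : ι} {t : Finset ι} (ha : a ∉ t) (ht : t.Nonempty) {A B : Set Ω}
    (hA : MeasurableSet[fieldSigma Z ↑(E a)] A)
    (hB : MeasurableSet[fieldSigma Z ↑(t.biUnion E)] B) :
    |P.real (A ∩ B) - P.real A * P.real B| ≤ mixCoef P Z (t.card * b) r := by
  refine abs_measureReal_inter_sub_le_mixCoef
    ((hEcard a).trans (Nat.le_mul_of_pos_left b ht.card_pos))
    (card_biUnion_le_card_mul t E b fun i _ => hEcard i) (fun x₁ hx₁ x₂ hx₂ => ?_) hA hB
  obtain ⟨j, hj, hx₂⟩ := mem_biUnion.mp hx₂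
  exact hEdist a j (ne_of_mem_of_not_mem hj ha).symm x₁ hx₁ x₂ hx₂

end RandomField

theorem product_expectation_mixing_bound_general
    {Ω : Type*} [MeasurableSpace Ω] (P : Measure Ω) [IsProbabilityMeasure P]
    {d : ℕ} (Z : (Fin d → ℤ) → Ω → ℝ) (hZ : ∀ x, Measurable (Z x))
    (K ε : ℝ)
    (hmix : ∀ b r : ℕ, 1 ≤ r → mixCoef P Z b r ≤ K * b * (r : ℝ) ^ (-ε))
    (k b r : ℕ) (hr : 1 ≤ r)
    (E : Fin k → Finset (Fin d → ℤ))
    (hEcard : ∀ i, (E i).card ≤ b)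
    (hEdist : ∀ i j : Fin k, i ≠ j →
      ∀ x₁ ∈ E i, ∀ x₂ ∈ E j, r ≤ Finset.univ.sup (fun l => (x₁ l - x₂ l).natAbs))
    (U : Fin k → Ω → ℂ)
    (hUmeas : ∀ i, Measurable[fieldSigma Z ↑(E i)] (U i))
    (hUbd : ∀ i, ∀ᵐ ω ∂P, ‖U i ω‖ ≤ 1) :
    ‖(∫ ω, ∏ i, U i ω ∂P) - ∏ i, ∫ ω, U i ω ∂P‖ ≤
      16 * K * b * (r : ℝ) ^ (-ε) * ((k : ℝ) * ((k : ℝ) - 1) / 2) := by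
  have hcov : ∀ a t, a ∉ t → t.Nonempty → ‖complexCov P (U a) (fun ω => ∏ i ∈ t, U i ω)‖ ≤
      16 * K * b * (r : ℝ) ^ (-ε) * t.card := fun a t ha ht =>
    calc _ ≤ 16 * mixCoef P Z (t.card * b) r :=
          norm_complexCov_le_of_mixing (fieldSigma_le hZ _) (fieldSigma_le hZ _)
            (fun _ _ => abs_measureReal_inter_sub_le_mixCoef_biUnion hEcard hEdist ha ht)
            (hUmeas a) (hUbd a) (measurable_prod_fieldSigma_biUnion hUmeas t)
            (ae_norm_prod_le_one hUbd t)
      _ ≤ 16 * (K * ↑(t.card * b) * (r : ℝ) ^ (-ε)) := by gcongr; exact hmix _ r hr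
      _ = _ := by push_cast; ring
  simpa using norm_integral_prod_sub_prod_integral_le univ
    (fun i => by simpa using norm_integral_le_of_norm_le_const (hUbd i)) hcov

/-- If the mixing coefficients of `Z` satisfy
`sup_b α_b(r)/b ≤ K r^{−ε}` for all `r ≥ 1`, and `U₁,…,U_k` are complex random variables
with `|Uᵢ| ≤ 1` a.s., `Uᵢ` measurable w.r.t. `𝔉(Eᵢ)` where `|Eᵢ| ≤ b` and the `Eᵢ` are at
pairwise distance at least `r ≥ 1`, then
`|E[∏ᵢ Uᵢ] − ∏ᵢ E[Uᵢ]| ≤ 16 K b r^{−ε} · k(k−1)/2`. -/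
theorem product_expectation_mixing_bound
    {Ω : Type*} [MeasurableSpace Ω] (P : Measure Ω) [IsProbabilityMeasure P]
    {d : ℕ} (Z : (Fin d → ℤ) → Ω → ℝ) (hZ : ∀ x, Measurable (Z x))
    (K ε : ℝ) (hε : 0 < ε)
    (hmix : ∀ b r : ℕ, 1 ≤ r → mixCoef P Z b r ≤ K * b * (r : ℝ) ^ (-ε))
    (k b r : ℕ) (hr : 1 ≤ r)
    (E : Fin k → Finset (Fin d → ℤ))
    (hEcard : ∀ i, (E i).card ≤ b)
    (hEdist : ∀ i j : Fin k, i ≠ j →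
      ∀ x₁ ∈ E i, ∀ x₂ ∈ E j, r ≤ Finset.univ.sup (fun l => (x₁ l - x₂ l).natAbs))
    (U : Fin k → Ω → ℂ)
    (hUmeas : ∀ i, Measurable[fieldSigma Z ↑(E i)] (U i))
    (hUbd : ∀ i, ∀ᵐ ω ∂P, ‖U i ω‖ ≤ 1) :
    ‖(∫ ω, ∏ i, U i ω ∂P) - ∏ i, ∫ ω, U i ω ∂P‖ ≤
      16 * K * b * (r : ℝ) ^ (-ε) * ((k : ℝ) * ((k : ℝ) - 1) / 2) :=
  product_expectation_mixing_bound_general P Z hZ K ε hmix k b r hr E hEcard hEdist U hUmeas hUbd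

end
end
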